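/- arXiv:1605.03142 — 8 statements merged into one kernel-verified Lean document; each statement's English description precedes it below -/
import Mathlib

section
/- In the utility self-modification model, let u' be the utility function that is constantly 1, fix an arbitrary world action â, and let π' be the policy that on every history selects the action a' = (â, u'). Then π' is optimal for the hedonistic value functions: for every policy π and every history h, V^{he,π}(h) ≤ V^{he,π'}(h). -/
/-!
STATEMENT 0 (Everitt et al., "Self-Modification of Policy and Utility Function
in Rational Agents", Theorem "Hedonistic agents self-modify", part 1).

Utility self-modification model: world actions `Ahat` (finite), percepts `Ept`
(finite).  An instantaneous utility function maps finite world histories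
(sequences of world-action–percept pairs) to `[0,1]`.  Actions are pairs of a
world action and the utility function selected for the next step.  The belief
`ρ` is modification-independent (it depends only on the world part of the
history, which is enforced by its type) and assigns a full-support probability
distribution over percepts.

The hedonistic value of a policy `π` at history `h` is the `ρ^π_ig`-expected
discounted sum `Σ_{k≥t} γ^{k-t} u_{k+1}(world history up to k)`, where
`u_{k+1}` is the utility function selected by the action `a_k` and all future
actions are chosen by `π` itself.  This is formalised via the finite-horizon
expectations `EUhe` and the discounted sum `Qhe`/`Vhe`.

Claim: if `u'` is the constant-1 utility function, `aw` an arbitrary world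
action, and `π'` the policy that always selects `(aw, u')`, then `π'` is
optimal for the hedonistic value functions: for every policy `π` and every
history `h`, `V^{he,π}(h) ≤ V^{he,π'}(h)`.
-/

noncomputable section

namespace Stmt0

/-- Instantaneous utility functions: world histories to `[0,1]`.
(Modification-independence is enforced by the type.) -/
abbrev Util (Ahat Ept : Type*) : Type _ := List (Ahat × Ept) → Set.Icc (0 : ℝ) 1

/-- Actions: a world action together with the utility function selected for
the next step. -/
abbrev Act (Ahat Ept : Type*) : Type _ := Ahat × Util Ahat Ept

/-- Histories: finite sequences of action–percept pairs. -/
abbrev Hist (Ahat Ept : Type*) : Type _ := List (Act Ahat Ept × Ept)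

/-- Policies: maps from histories to actions. -/
abbrev Policy (Ahat Ept : Type*) : Type _ := Hist Ahat Ept → Act Ahat Ept

/-- The world part of a history (utility-function components deleted). -/
def hworld {Ahat Ept : Type*} (h : Hist Ahat Ept) : List (Ahat × Ept) :=
  h.map fun pe => (pe.1.1, pe.2)

/-- `EUhe ρ π h a n` is the expected hedonistic instantaneous utility received
`n` steps after taking action `a` following history `h`, with percepts sampled
from `ρ` and all future actions taken by `π` (the ignorant measure `ρ^π_ig`);
the utility used at each step is the one selected by the action of that step. -/
def EUhe {Ahat Ept : Type*} [Fintype Ept]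
    (ρ : List (Ahat × Ept) → Ahat → Ept → ℝ) (π : Policy Ahat Ept) :
    Hist Ahat Ept → Act Ahat Ept → ℕ → ℝ
  | h, a, 0 => ∑ e, ρ (hworld h) a.1 e * ((a.2 (hworld h ++ [(a.1, e)]) : ℝ))
  | h, a, n + 1 =>
      ∑ e, ρ (hworld h) a.1 e *
        EUhe ρ π (h ++ [(a, e)]) (π (h ++ [(a, e)])) n

/-- The hedonistic `Q`-value: expected discounted sum of future instantaneous
utilities, each evaluated by the utility function selected at that step. -/
def Qhe {Ahat Ept : Type*} [Fintype Ept] (γ : ℝ)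
    (ρ : List (Ahat × Ept) → Ahat → Ept → ℝ) (π : Policy Ahat Ept)
    (h : Hist Ahat Ept) (a : Act Ahat Ept) : ℝ :=
  ∑' n : ℕ, γ ^ n * EUhe ρ π h a n

/-- The hedonistic `V`-value of a policy. -/
def Vhe {Ahat Ept : Type*} [Fintype Ept] (γ : ℝ)
    (ρ : List (Ahat × Ept) → Ahat → Ept → ℝ) (π : Policy Ahat Ept)
    (h : Hist Ahat Ept) : ℝ :=
  Qhe γ ρ π h (π h)

/-!
Every instantaneous utility lies in `[0,1]`, so every hedonistic value is at most
`∑ γ ^ n = (1 - γ)⁻¹`; a policy that always selects the constant-1 utility function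
attains this bound.
-/

section Bounds

variable {Ahat Ept : Type*} [Fintype Ept] {ρ : List (Ahat × Ept) → Ahat → Ept → ℝ}

theorem EUhe_nonneg (hρ : ∀ wh a e, 0 ≤ ρ wh a e) (π : Policy Ahat Ept) (n : ℕ) :
    ∀ (h : Hist Ahat Ept) (a : Act Ahat Ept), 0 ≤ EUhe ρ π h a n := by
  induction n with
  | zero => exact fun h a => Finset.sum_nonneg fun e _ => mul_nonneg (hρ _ _ _) (a.2 _).2.1
  | succ n ih => exact fun h a => Finset.sum_nonneg fun e _ => mul_nonneg (hρ _ _ _) (ih _ _)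

theorem EUhe_le_one (hρ : ∀ wh a e, 0 ≤ ρ wh a e) (hρsum : ∀ wh a, ∑ e, ρ wh a e = 1)
    (π : Policy Ahat Ept) (n : ℕ) :
    ∀ (h : Hist Ahat Ept) (a : Act Ahat Ept), EUhe ρ π h a n ≤ 1 := by
  induction n with
  | zero =>
    intro h a
    calc EUhe ρ π h a 0 ≤ ∑ e, ρ (hworld h) a.1 e * 1 :=
          Finset.sum_le_sum fun e _ => mul_le_mul_of_nonneg_left (a.2 _).2.2 (hρ _ _ _)
      _ = 1 := by simp only [mul_one, hρsum]
  | succ n ih =>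
    intro h a
    calc EUhe ρ π h a (n + 1) ≤ ∑ e, ρ (hworld h) a.1 e * 1 :=
          Finset.sum_le_sum fun e _ => mul_le_mul_of_nonneg_left (ih _ _) (hρ _ _ _)
      _ = 1 := by simp only [mul_one, hρsum]

theorem EUhe_eq_one_of_utility_eq_one (hρsum : ∀ wh a, ∑ e, ρ wh a e = 1)
    {π : Policy Ahat Ept} (hπ : ∀ h wh, ((π h).2 wh : ℝ) = 1) (n : ℕ) :
    ∀ (h : Hist Ahat Ept) (a : Act Ahat Ept), (∀ wh, (a.2 wh : ℝ) = 1) →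
      EUhe ρ π h a n = 1 := by
  induction n with
  | zero =>
    intro h a ha
    simp only [EUhe, ha, mul_one, hρsum]
  | succ n ih =>
    intro h a _
    simp only [EUhe, ih _ _ (hπ _), mul_one, hρsum]

variable {γ : ℝ}

theorem Qhe_le_geometric (hγ0 : 0 ≤ γ) (hγ1 : γ < 1) (hρ : ∀ wh a e, 0 ≤ ρ wh a e)
    (hρsum : ∀ wh a, ∑ e, ρ wh a e = 1) (π : Policy Ahat Ept) (h : Hist Ahat Ept)
    (a : Act Ahat Ept) : Qhe γ ρ π h a ≤ (1 - γ)⁻¹ := by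
  have hle : ∀ n, γ ^ n * EUhe ρ π h a n ≤ γ ^ n := fun n =>
    mul_le_of_le_one_right (pow_nonneg hγ0 n) (EUhe_le_one hρ hρsum π n h a)
  have hgeom := summable_geometric_of_lt_one hγ0 hγ1
  rw [Qhe, ← tsum_geometric_of_lt_one hγ0 hγ1]
  exact Summable.tsum_le_tsum hle
    (hgeom.of_nonneg_of_le (fun n => mul_nonneg (pow_nonneg hγ0 n) (EUhe_nonneg hρ π n h a)) hle)
    hgeom

theorem Qhe_eq_geometric_of_utility_eq_one (hγ0 : 0 ≤ γ) (hγ1 : γ < 1)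
    (hρsum : ∀ wh a, ∑ e, ρ wh a e = 1) {π : Policy Ahat Ept}
    (hπ : ∀ h wh, ((π h).2 wh : ℝ) = 1) (h : Hist Ahat Ept) {a : Act Ahat Ept}
    (ha : ∀ wh, (a.2 wh : ℝ) = 1) : Qhe γ ρ π h a = (1 - γ)⁻¹ := by
  simp only [Qhe, EUhe_eq_one_of_utility_eq_one hρsum hπ _ h a ha, mul_one,
    tsum_geometric_of_lt_one hγ0 hγ1]

end Bounds

theorem hedonistic_selfmod_optimal_general
    {Ahat Ept : Type*} [Fintype Ept]
    (ρ : List (Ahat × Ept) → Ahat → Ept → ℝ)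
    (hρpos : ∀ wh (aw : Ahat) (e : Ept), 0 < ρ wh aw e)
    (hρsum : ∀ wh (aw : Ahat), ∑ e, ρ wh aw e = 1)
    (γ : ℝ) (hγ0 : 0 < γ) (hγ1 : γ < 1)
    (u' : Util Ahat Ept) (hu' : ∀ wh, (u' wh : ℝ) = 1)
    (aw : Ahat)
    (π' : Policy Ahat Ept) (hπ' : ∀ h, π' h = (aw, u'))
    (π : Policy Ahat Ept) (h : Hist Ahat Ept) :
    Vhe γ ρ π h ≤ Vhe γ ρ π' h := by
  have hπ'u : ∀ h wh, ((π' h).2 wh : ℝ) = 1 := fun h => by simpa only [hπ'] using hu'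
  calc Vhe γ ρ π h ≤ (1 - γ)⁻¹ :=
        Qhe_le_geometric hγ0.le hγ1 (fun _ _ _ => (hρpos _ _ _).le) hρsum π h (π h)
    _ = Vhe γ ρ π' h :=
        (Qhe_eq_geometric_of_utility_eq_one hγ0.le hγ1 hρsum hπ'u h (hπ'u h)).symm

/-- **Hedonistic agents self-modify.**  The policy `π'` that always performs
the self-modifying action `(aw, u')`, where `u'` is the constant-1 utility
function, is optimal for the hedonistic value functions. -/
theorem hedonistic_selfmod_optimal
    {Ahat Ept : Type*} [Fintype Ahat] [Nonempty Ahat] [Fintype Ept] [Nonempty Ept]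
    (ρ : List (Ahat × Ept) → Ahat → Ept → ℝ)
    (hρpos : ∀ wh (aw : Ahat) (e : Ept), 0 < ρ wh aw e)
    (hρsum : ∀ wh (aw : Ahat), ∑ e, ρ wh aw e = 1)
    (γ : ℝ) (hγ0 : 0 < γ) (hγ1 : γ < 1)
    (u' : Util Ahat Ept) (hu' : ∀ wh, (u' wh : ℝ) = 1)
    (aw : Ahat)
    (π' : Policy Ahat Ept) (hπ' : ∀ h, π' h = (aw, u'))
    (π : Policy Ahat Ept) (h : Hist Ahat Ept) :
    Vhe γ ρ π h ≤ Vhe γ ρ π' h :=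
  hedonistic_selfmod_optimal_general ρ hρpos hρsum γ hγ0 hγ1 u' hu' aw π' hπ' π h

end Stmt0
end
end

section
/- In the utility self-modification model, let u' be the utility function that is constantly 1, fix an arbitrary world action â, and let π' be the policy that on every history selects the action a' = (â, u'). Then for every history ae_{<t}, the hedonistic value of π' equals the maximum possible value: V^{he,π'}(ae_{<t}) = 1/(1-γ). -/
noncomputable section

namespace Stmt1

/-- Instantaneous utility functions: world histories to `[0,1]`.
(Modification-independence is enforced by the type.) -/
abbrev Util (Ahat Ept : Type*) : Type _ := List (Ahat × Ept) → Set.Icc (0 : ℝ) 1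

/-- Actions: a world action together with the utility function selected for
the next step. -/
abbrev Act (Ahat Ept : Type*) : Type _ := Ahat × Util Ahat Ept

/-- Histories: finite sequences of action–percept pairs. -/
abbrev Hist (Ahat Ept : Type*) : Type _ := List (Act Ahat Ept × Ept)

/-- Policies: maps from histories to actions. -/
abbrev Policy (Ahat Ept : Type*) : Type _ := Hist Ahat Ept → Act Ahat Ept

/-- The world part of a history (utility-function components deleted). -/
def hworld {Ahat Ept : Type*} (h : Hist Ahat Ept) : List (Ahat × Ept) :=
  h.map fun pe => (pe.1.1, pe.2)

/-- `EUhe ρ π h a n` is the expected hedonistic instantaneous utility received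
`n` steps after taking action `a` following history `h`, with percepts sampled
from `ρ` and all future actions taken by `π` (the ignorant measure `ρ^π_ig`);
the utility used at each step is the one selected by the action of that step. -/
def EUhe {Ahat Ept : Type*} [Fintype Ept]
    (ρ : List (Ahat × Ept) → Ahat → Ept → ℝ) (π : Policy Ahat Ept) :
    Hist Ahat Ept → Act Ahat Ept → ℕ → ℝ
  | h, a, 0 => ∑ e, ρ (hworld h) a.1 e * ((a.2 (hworld h ++ [(a.1, e)]) : ℝ))
  | h, a, n + 1 =>
      ∑ e, ρ (hworld h) a.1 e *
        EUhe ρ π (h ++ [(a, e)]) (π (h ++ [(a, e)])) n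

/-- The hedonistic `Q`-value: expected discounted sum of future instantaneous
utilities, each evaluated by the utility function selected at that step. -/
def Qhe {Ahat Ept : Type*} [Fintype Ept] (γ : ℝ)
    (ρ : List (Ahat × Ept) → Ahat → Ept → ℝ) (π : Policy Ahat Ept)
    (h : Hist Ahat Ept) (a : Act Ahat Ept) : ℝ :=
  ∑' n : ℕ, γ ^ n * EUhe ρ π h a n

/-- The hedonistic `V`-value of a policy. -/
def Vhe {Ahat Ept : Type*} [Fintype Ept] (γ : ℝ)
    (ρ : List (Ahat × Ept) → Ahat → Ept → ℝ) (π : Policy Ahat Ept)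
    (h : Hist Ahat Ept) : ℝ :=
  Qhe γ ρ π h (π h)

theorem EUhe_eq_one_of_utility_eq_one {Ahat Ept : Type*} [Fintype Ept]
    {ρ : List (Ahat × Ept) → Ahat → Ept → ℝ} (hρsum : ∀ wh aw, ∑ e, ρ wh aw e = 1)
    {π : Policy Ahat Ept} (hπ : ∀ h wh, ((π h).2 wh : ℝ) = 1) (n : ℕ) :
    ∀ (h : Hist Ahat Ept) (a : Act Ahat Ept), (∀ wh, (a.2 wh : ℝ) = 1) →
      EUhe ρ π h a n = 1 := by
  induction n with
  | zero =>
    intro h a ha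
    simp only [EUhe, ha, mul_one, hρsum]
  | succ n ih =>
    intro h a _
    simp only [EUhe, ih _ _ (hπ _), mul_one, hρsum]

theorem Qhe_eq_of_EUhe_eq_one {Ahat Ept : Type*} [Fintype Ept] {γ : ℝ} (hγ0 : 0 ≤ γ)
    (hγ1 : γ < 1) {ρ : List (Ahat × Ept) → Ahat → Ept → ℝ} {π : Policy Ahat Ept}
    {h : Hist Ahat Ept} {a : Act Ahat Ept} (hEU : ∀ n, EUhe ρ π h a n = 1) :
    Qhe γ ρ π h a = 1 / (1 - γ) := by
  simp only [Qhe, hEU, mul_one, tsum_geometric_of_lt_one hγ0 hγ1, one_div]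

theorem hedonistic_selfmod_value_general
    {Ahat Ept : Type*} [Fintype Ept]
    (ρ : List (Ahat × Ept) → Ahat → Ept → ℝ)
    (hρsum : ∀ wh (aw : Ahat), ∑ e, ρ wh aw e = 1)
    (γ : ℝ) (hγ0 : 0 < γ) (hγ1 : γ < 1)
    (u' : Util Ahat Ept) (hu' : ∀ wh, (u' wh : ℝ) = 1)
    (aw : Ahat)
    (π' : Policy Ahat Ept) (hπ' : ∀ h, π' h = (aw, u'))
    (h : Hist Ahat Ept) :
    Vhe γ ρ π' h = 1 / (1 - γ) := by
  have hπ'_util : ∀ h wh, ((π' h).2 wh : ℝ) = 1 := fun h wh => by rw [hπ', hu']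
  exact Qhe_eq_of_EUhe_eq_one hγ0.le hγ1
    (EUhe_eq_one_of_utility_eq_one hρsum hπ'_util · h (π' h) (hπ'_util h))

/-- **Hedonistic agents self-modify (value computation).**  The policy `π'`
that always performs the self-modifying action `(aw, u')`, where `u'` is the
constant-1 utility function, attains the maximum possible hedonistic value:
`V^{he,π'}(h) = 1/(1-γ)` on every history. -/
theorem hedonistic_selfmod_value
    {Ahat Ept : Type*} [Fintype Ahat] [Nonempty Ahat] [Fintype Ept] [Nonempty Ept]
    (ρ : List (Ahat × Ept) → Ahat → Ept → ℝ)
    (hρpos : ∀ wh (aw : Ahat) (e : Ept), 0 < ρ wh aw e)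
    (hρsum : ∀ wh (aw : Ahat), ∑ e, ρ wh aw e = 1)
    (γ : ℝ) (hγ0 : 0 < γ) (hγ1 : γ < 1)
    (u' : Util Ahat Ept) (hu' : ∀ wh, (u' wh : ℝ) = 1)
    (aw : Ahat)
    (π' : Policy Ahat Ept) (hπ' : ∀ h, π' h = (aw, u'))
    (h : Hist Ahat Ept) :
    Vhe γ ρ π' h = 1 / (1 - γ) :=
  hedonistic_selfmod_value_general ρ hρsum γ hγ0 hγ1 u' hu' aw π' hπ' h

end Stmt1
end
end

section
/- In the policy self-modification model, suppose the belief ρ and the current utility function u_t are modification-independent, and every named policy ι(p), p ∈ P, is modification-independent. Let π be a modification-independent policy with π(ae_{<t}) = (â_t, π_{t+1}), and let π̃ be identical to π except that on the history ae_{<t} it makes a different self-modification, π̃(ae_{<t}) = (â_t, π'_{t+1}) with π'_{t+1} ≠ π_{t+1}. Then the ignorant values agree: V^{ig,π̃}_t(ae_{<t}) = V^{ig,π}_t(ae_{<t}). -/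
/-!
Under the ignorant value a policy assumes that all its future actions are taken by itself, never by
the policy it names, so the name component of an action matters only through the policy's later
choices. The value of an action after a history queries the policy only on strictly longer
histories, where `π̃` agrees with `π`; and a modification-independent `π` answers alike on
histories with the same world part. Hence `(â_t, p')` and `(â_t, p)` have the same value under `π`.
-/

noncomputable section

namespace Stmt2

/-- Actions: a world action together with the name of the policy selected for
the next step. -/
abbrev Act (Ahat P : Type*) : Type _ := Ahat × P

/-- Histories: finite sequences of action–percept pairs. -/
abbrev Hist (Ahat P Ept : Type*) : Type _ := List (Act Ahat P × Ept)

/-- Policies: maps from histories to actions. -/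
abbrev Policy (Ahat P Ept : Type*) : Type _ := Hist Ahat P Ept → Act Ahat P

/-- The world part of a history (policy-name components deleted). -/
def hworld {Ahat P Ept : Type*} (h : Hist Ahat P Ept) : List (Ahat × Ept) :=
  h.map fun pe => (pe.1.1, pe.2)

/-- A function on histories is modification-independent if its value depends
only on the world part of its argument. -/
def ModIndep {Ahat P Ept α : Type*} (f : Hist Ahat P Ept → α) : Prop :=
  ∀ h h' : Hist Ahat P Ept, hworld h = hworld h' → f h = f h'


/-- `EUig ρ u π h a n`: expected `u`-utility received `n` steps after taking
action `a` following history `h`, with percepts sampled from `ρ` and all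
future actions taken by `π` itself (the ignorant measure `ρ^π_ig`). -/
def EUig {Ahat P Ept : Type*} [Fintype Ept]
    (ρ : List (Ahat × Ept) → Ahat → Ept → ℝ) (u : List (Ahat × Ept) → ℝ)
    (π : Policy Ahat P Ept) :
    Hist Ahat P Ept → Act Ahat P → ℕ → ℝ
  | h, a, 0 => ∑ e, ρ (hworld h) a.1 e * u (hworld h ++ [(a.1, e)])
  | h, a, n + 1 =>
      ∑ e, ρ (hworld h) a.1 e *
        EUig ρ u π (h ++ [(a, e)]) (π (h ++ [(a, e)])) n

/-- The ignorant `Q`-value of a policy `π`. -/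
def Qig {Ahat P Ept : Type*} [Fintype Ept] (γ : ℝ)
    (ρ : List (Ahat × Ept) → Ahat → Ept → ℝ) (u : List (Ahat × Ept) → ℝ)
    (π : Policy Ahat P Ept) (h : Hist Ahat P Ept) (a : Act Ahat P) : ℝ :=
  ∑' n : ℕ, γ ^ n * EUig ρ u π h a n

/-- The ignorant `V`-value of a policy `π`. -/
def Vig {Ahat P Ept : Type*} [Fintype Ept] (γ : ℝ)
    (ρ : List (Ahat × Ept) → Ahat → Ept → ℝ) (u : List (Ahat × Ept) → ℝ)
    (π : Policy Ahat P Ept) (h : Hist Ahat P Ept) : ℝ :=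
  Qig γ ρ u π h (π h)

@[simp]
lemma hworld_append_singleton {Ahat P Ept : Type*} (h : Hist Ahat P Ept) (a : Act Ahat P)
    (e : Ept) : hworld (h ++ [(a, e)]) = hworld h ++ [(a.1, e)] := by
  simp [hworld]

section

variable {Ahat P Ept : Type*} [Fintype Ept]
  (ρ : List (Ahat × Ept) → Ahat → Ept → ℝ) (u : List (Ahat × Ept) → ℝ)

lemma EUig_eq_of_hworld_eq {π : Policy Ahat P Ept} (hπ : ModIndep π) (n : ℕ)
    {h h' : Hist Ahat P Ept} {a a' : Act Ahat P} (hw : hworld h = hworld h') (ha : a.1 = a'.1) :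
    EUig ρ u π h a n = EUig ρ u π h' a' n := by
  induction n generalizing h h' a a' with
  | zero => simp only [EUig, hw, ha]
  | succ n ih =>
    simp only [EUig, hw, ha]
    refine Finset.sum_congr rfl fun e _ => congrArg _ ?_
    have hw' : hworld (h ++ [(a, e)]) = hworld (h' ++ [(a', e)]) := by
      simp only [hworld_append_singleton, hw, ha]
    exact ih hw' (congrArg Prod.fst (hπ _ _ hw'))

lemma EUig_congr_policy {π π' : Policy Ahat P Ept} (n : ℕ) {h : Hist Ahat P Ept}
    (hππ' : ∀ h' : Hist Ahat P Ept, h.length < h'.length → π h' = π' h') (a : Act Ahat P) :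
    EUig ρ u π h a n = EUig ρ u π' h a n := by
  induction n generalizing h a with
  | zero => rfl
  | succ n ih =>
    simp only [EUig]
    refine Finset.sum_congr rfl fun e _ => congrArg _ ?_
    have hlong : ∀ h' : Hist Ahat P Ept, (h ++ [(a, e)]).length < h'.length → π h' = π' h' :=
      fun h' hl => hππ' h' (by simp at hl; omega)
    rw [hππ' _ (by simp), ih hlong]

lemma Qig_eq_of_hworld_eq (γ : ℝ) {π : Policy Ahat P Ept} (hπ : ModIndep π)
    {h h' : Hist Ahat P Ept} {a a' : Act Ahat P} (hw : hworld h = hworld h') (ha : a.1 = a'.1) :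
    Qig γ ρ u π h a = Qig γ ρ u π h' a' :=
  tsum_congr fun n => by rw [EUig_eq_of_hworld_eq ρ u hπ n hw ha]

lemma Qig_congr_policy (γ : ℝ) {π π' : Policy Ahat P Ept} {h : Hist Ahat P Ept}
    (hππ' : ∀ h' : Hist Ahat P Ept, h.length < h'.length → π h' = π' h') (a : Act Ahat P) :
    Qig γ ρ u π h a = Qig γ ρ u π' h a :=
  tsum_congr fun n => by rw [EUig_congr_policy ρ u n hππ' a]

end

theorem ignorant_selfmod_indifferent_general
    {Ahat P Ept : Type*} [Fintype Ept]
    (ρ : List (Ahat × Ept) → Ahat → Ept → ℝ)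
    (u : List (Ahat × Ept) → ℝ)
    (γ : ℝ)
    (π πt : Policy Ahat P Ept) (hπ : ModIndep π)
    (h0 : Hist Ahat P Ept) (aw : Ahat) (p p' : P)
    (hπh0 : π h0 = (aw, p))
    (hmod : πt h0 = (aw, p'))
    (hsame : ∀ h : Hist Ahat P Ept, h ≠ h0 → πt h = π h) :
    Vig γ ρ u πt h0 = Vig γ ρ u π h0 := by
  have hlong : ∀ h : Hist Ahat P Ept, h0.length < h.length → πt h = π h :=
    fun h hl => hsame h (by rintro rfl; exact lt_irrefl _ hl)
  calc Vig γ ρ u πt h0 = Qig γ ρ u πt h0 (aw, p') := by rw [Vig, hmod]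
    _ = Qig γ ρ u π h0 (aw, p') := Qig_congr_policy ρ u γ hlong _
    _ = Qig γ ρ u π h0 (aw, p) := Qig_eq_of_hworld_eq ρ u γ hπ rfl rfl
    _ = Vig γ ρ u π h0 := by rw [Vig, hπh0]

/-- **Ignorant agents may self-modify.**  Changing the self-modification made
by a modification-independent policy at a single history does not change its
ignorant value there. -/
theorem ignorant_selfmod_indifferent
    {Ahat P Ept : Type*} [Fintype Ahat] [Nonempty Ahat] [Fintype Ept] [Nonempty Ept]
    (ι : P → Policy Ahat P Ept)
    (hι : ∀ p : P, ModIndep (ι p))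
    (ρ : List (Ahat × Ept) → Ahat → Ept → ℝ)
    (hρpos : ∀ wh (aw : Ahat) (e : Ept), 0 < ρ wh aw e)
    (hρsum : ∀ wh (aw : Ahat), ∑ e, ρ wh aw e = 1)
    (u : List (Ahat × Ept) → ℝ)
    (hu : ∀ wh, u wh ∈ Set.Icc (0 : ℝ) 1)
    (γ : ℝ) (hγ0 : 0 < γ) (hγ1 : γ < 1)
    (π πt : Policy Ahat P Ept) (hπ : ModIndep π)
    (h0 : Hist Ahat P Ept) (aw : Ahat) (p p' : P)
    (hπh0 : π h0 = (aw, p))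
    (hmod : πt h0 = (aw, p'))
    (hdiff : ι p' ≠ ι p)
    (hsame : ∀ h : Hist Ahat P Ept, h ≠ h0 → πt h = π h) :
    Vig γ ρ u πt h0 = Vig γ ρ u π h0 :=
  ignorant_selfmod_indifferent_general ρ u γ π πt hπ h0 aw p p' hπh0 hmod hsame

end Stmt2
end
end

section
/- In the policy self-modification model, suppose the belief ρ and the initial utility function u_1 are modification-independent, and the initial policy π_1 = ι(p_1) is optimal for the realistic value function V^re_1. Then for every t ≥ 1, every percept sequence e_{<t}, and the action sequence a_{<t} generated on-policy by a_i = π_i(ae_{<i}) (where π_{i+1} is the policy selected by action a_i), the policy at time t acts optimally with respect to the initial utility function: Q^re_1(ae_{<t} π_t(ae_{<t})) = Q^re_1(ae_{<t} π_1(ae_{<t})). -/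
/-!
STATEMENT 3 (Everitt et al., Theorem "Realistic policy-modifying agents make
safe modifications").

Policy self-modification model: world actions `Ahat` (finite), percepts `Ept`
(finite), policy names `P` with naming map `ι : P → Policy`.  An action
`(aw, p)` consists of a world action and the name of the policy used at the
next step.  The belief `ρ` and the initial utility function `u` are
modification-independent (enforced by their types).

The realistic value functions `Qre`/`Vre` (at time 1, for the initial utility
function `u`) give the expected discounted `u`-utility where percepts are
sampled from `ρ` and future actions are chosen by the policies selected by the
preceding actions (the realistic measure).

`build ι h π es` rolls out the on-policy history: starting from history `h`
and current policy `π`, each incoming percept `e` extends the history with the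
action chosen by the current policy, which is then replaced by the policy it
selects.  Thus `build ι [] π1 es` is the history `ae_{<t}` generated by
`a_i = π_i(ae_{<i})` for the percept sequence `es = e_{<t}`, together with the
time-`t` policy `π_t`.

Claim: if the initial policy `π1 = ι p1` is optimal for `V^re_1`, then at
every on-policy history the current policy acts `Q^re_1`-optimally:
`Q^re_1(ae_{<t} π_t(ae_{<t})) = Q^re_1(ae_{<t} π_1(ae_{<t}))`.
-/

noncomputable section

namespace Stmt3

/-- Actions: a world action together with the name of the policy selected for
the next step. -/
abbrev Act (Ahat P : Type*) : Type _ := Ahat × P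

/-- Histories: finite sequences of action–percept pairs. -/
abbrev Hist (Ahat P Ept : Type*) : Type _ := List (Act Ahat P × Ept)

/-- Policies: maps from histories to actions. -/
abbrev Policy (Ahat P Ept : Type*) : Type _ := Hist Ahat P Ept → Act Ahat P

/-- The world part of a history (policy-name components deleted). -/
def hworld {Ahat P Ept : Type*} (h : Hist Ahat P Ept) : List (Ahat × Ept) :=
  h.map fun pe => (pe.1.1, pe.2)

/-- A function on histories is modification-independent if its value depends
only on the world part of its argument. -/
def ModIndep {Ahat P Ept α : Type*} (f : Hist Ahat P Ept → α) : Prop :=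
  ∀ h h' : Hist Ahat P Ept, hworld h = hworld h' → f h = f h'


/-- `EUre ι ρ u h a n`: expected `u`-utility received `n` steps after taking
action `a` following history `h`, with percepts sampled from `ρ` and every
future action taken by the policy selected by the preceding action (the
realistic measure `ρ_re`). -/
def EUre {Ahat P Ept : Type*} [Fintype Ept] (ι : P → Policy Ahat P Ept)
    (ρ : List (Ahat × Ept) → Ahat → Ept → ℝ) (u : List (Ahat × Ept) → ℝ) :
    Hist Ahat P Ept → Act Ahat P → ℕ → ℝ
  | h, a, 0 => ∑ e, ρ (hworld h) a.1 e * u (hworld h ++ [(a.1, e)])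
  | h, a, n + 1 =>
      ∑ e, ρ (hworld h) a.1 e *
        EUre ι ρ u (h ++ [(a, e)]) (ι a.2 (h ++ [(a, e)])) n

/-- The realistic `Q`-value: expected discounted `u`-utility when all future
actions are chosen by the policies selected through self-modification. -/
def Qre {Ahat P Ept : Type*} [Fintype Ept] (ι : P → Policy Ahat P Ept)
    (ρ : List (Ahat × Ept) → Ahat → Ept → ℝ) (u : List (Ahat × Ept) → ℝ)
    (γ : ℝ) (h : Hist Ahat P Ept) (a : Act Ahat P) : ℝ :=
  ∑' n : ℕ, γ ^ n * EUre ι ρ u h a n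

/-- The realistic `V`-value of a policy `π` (a policy argument beyond the next
action is superfluous, since the action determines the next policy). -/
def Vre {Ahat P Ept : Type*} [Fintype Ept] (ι : P → Policy Ahat P Ept)
    (ρ : List (Ahat × Ept) → Ahat → Ept → ℝ) (u : List (Ahat × Ept) → ℝ)
    (γ : ℝ) (π : Policy Ahat P Ept) (h : Hist Ahat P Ept) : ℝ :=
  Qre ι ρ u γ h (π h)

/-- On-policy rollout: `build ι h π es` extends the history `h` (with current
policy `π`) by the actions chosen on-policy for the percept sequence `es`,
returning the resulting history together with the policy in force after it. -/
def build {Ahat P Ept : Type*} (ι : P → Policy Ahat P Ept) :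
    Hist Ahat P Ept → Policy Ahat P Ept → List Ept →
      Hist Ahat P Ept × Policy Ahat P Ept
  | h, π, [] => (h, π)
  | h, π, e :: es => build ι (h ++ [(π h, e)]) (ι (π h).2) es

/-!
Write `V* = V^{re,π₁}`. Optimality of `π₁` means `Q(h, a) ≤ V*(h)` for every action `a`. Since
`ρ` and `u` only see world histories and the action `(â, p₁)` re-selects `π₁`, the Bellman
equation shows that `γ`-times any bound on `V*(h) - V*(h')` over pairs of histories with the same
world part is again such a bound; hence `V*` is modification-independent. If now `a` is optimal
at `h`, then so is `(â, p₁)`, whose continuation values are `V*(hae)`; comparing the two Bellman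
equations with `V^{re, ι p}(hae) ≤ V*(hae)` termwise, full support of `ρ` forces the policy
selected by `a` to be optimal at every successor history. Induction along the rollout finishes.
-/

section Realistic

variable {Ahat P Ept : Type*}

theorem hworld_append (h : Hist Ahat P Ept) (a : Act Ahat P) (e : Ept) :
    hworld (h ++ [(a, e)]) = hworld h ++ [(a.1, e)] := by
  simp [hworld]

variable [Fintype Ept] {ι : P → Policy Ahat P Ept} {ρ : List (Ahat × Ept) → Ahat → Ept → ℝ}
  {u : List (Ahat × Ept) → ℝ} {γ : ℝ}

theorem EUre_zero_congr {h h' : Hist Ahat P Ept} {a a' : Act Ahat P}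
    (hw : hworld h = hworld h') (ha : a.1 = a'.1) :
    EUre ι ρ u h a 0 = EUre ι ρ u h' a' 0 := by
  simp only [EUre, hw, ha]

theorem EUre_mem_Icc (hρ : ∀ wh aw e, 0 ≤ ρ wh aw e) (hρsum : ∀ wh aw, ∑ e, ρ wh aw e = 1)
    (hu : ∀ wh, u wh ∈ Set.Icc (0 : ℝ) 1) (n : ℕ) (h : Hist Ahat P Ept) (a : Act Ahat P) :
    EUre ι ρ u h a n ∈ Set.Icc (0 : ℝ) 1 := by
  have average_mem_Icc {wh aw} {f : Ept → ℝ} (hf : ∀ e, f e ∈ Set.Icc (0 : ℝ) 1) :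
      ∑ e, ρ wh aw e * f e ∈ Set.Icc (0 : ℝ) 1 := by
    refine ⟨Finset.sum_nonneg fun e _ => mul_nonneg (hρ _ _ _) (hf e).1, ?_⟩
    calc ∑ e, ρ wh aw e * f e ≤ ∑ e, ρ wh aw e :=
          Finset.sum_le_sum fun e _ => mul_le_of_le_one_right (hρ _ _ _) (hf e).2
      _ = 1 := hρsum _ _
  induction n generalizing h a with
  | zero => exact average_mem_Icc fun e => hu _
  | succ n ih => exact average_mem_Icc fun e => ih _ _

theorem summable_EUre (hρ : ∀ wh aw e, 0 ≤ ρ wh aw e) (hρsum : ∀ wh aw, ∑ e, ρ wh aw e = 1)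
    (hu : ∀ wh, u wh ∈ Set.Icc (0 : ℝ) 1) (hγ0 : 0 ≤ γ) (hγ1 : γ < 1)
    (h : Hist Ahat P Ept) (a : Act Ahat P) :
    Summable fun n => γ ^ n * EUre ι ρ u h a n :=
  (summable_geometric_of_lt_one hγ0 hγ1).of_nonneg_of_le
    (fun n => mul_nonneg (pow_nonneg hγ0 n) (EUre_mem_Icc hρ hρsum hu n h a).1)
    (fun n => mul_le_of_le_one_right (pow_nonneg hγ0 n) (EUre_mem_Icc hρ hρsum hu n h a).2)

theorem Qre_mem_Icc (hρ : ∀ wh aw e, 0 ≤ ρ wh aw e) (hρsum : ∀ wh aw, ∑ e, ρ wh aw e = 1)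
    (hu : ∀ wh, u wh ∈ Set.Icc (0 : ℝ) 1) (hγ0 : 0 ≤ γ) (hγ1 : γ < 1)
    (h : Hist Ahat P Ept) (a : Act Ahat P) :
    Qre ι ρ u γ h a ∈ Set.Icc 0 (1 - γ)⁻¹ := by
  refine ⟨tsum_nonneg fun n =>
    mul_nonneg (pow_nonneg hγ0 n) (EUre_mem_Icc hρ hρsum hu n h a).1, ?_⟩
  rw [← tsum_geometric_of_lt_one hγ0 hγ1]
  exact (summable_EUre hρ hρsum hu hγ0 hγ1 h a).tsum_le_tsum
    (fun n => mul_le_of_le_one_right (pow_nonneg hγ0 n) (EUre_mem_Icc hρ hρsum hu n h a).2)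
    (summable_geometric_of_lt_one hγ0 hγ1)

theorem Qre_eq_EUre_zero_add (hρ : ∀ wh aw e, 0 ≤ ρ wh aw e)
    (hρsum : ∀ wh aw, ∑ e, ρ wh aw e = 1) (hu : ∀ wh, u wh ∈ Set.Icc (0 : ℝ) 1)
    (hγ0 : 0 ≤ γ) (hγ1 : γ < 1) (h : Hist Ahat P Ept) (a : Act Ahat P) :
    Qre ι ρ u γ h a = EUre ι ρ u h a 0 +
      γ * ∑ e, ρ (hworld h) a.1 e * Vre ι ρ u γ (ι a.2) (h ++ [(a, e)]) := by
  have hs := summable_EUre (ι := ι) hρ hρsum hu hγ0 hγ1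
  have shift : (fun n => γ ^ (n + 1) * EUre ι ρ u h a (n + 1)) = fun n =>
      γ * ∑ e, ρ (hworld h) a.1 e *
        (γ ^ n * EUre ι ρ u (h ++ [(a, e)]) (ι a.2 (h ++ [(a, e)])) n) := by
    ext n
    simp only [EUre, Finset.mul_sum]
    exact Finset.sum_congr rfl fun e _ => by ring
  rw [Qre, (hs h a).tsum_eq_zero_add, shift, tsum_mul_left,
    Summable.tsum_finsetSum fun e _ => (hs _ _).mul_left _]
  simp only [pow_zero, one_mul, tsum_mul_left, Vre, Qre]

theorem Qre_le_Vre_of_optimal (hρ : ∀ wh aw e, 0 ≤ ρ wh aw e)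
    (hρsum : ∀ wh aw, ∑ e, ρ wh aw e = 1) (hu : ∀ wh, u wh ∈ Set.Icc (0 : ℝ) 1)
    (hγ0 : 0 ≤ γ) (hγ1 : γ < 1) {π₁ : Policy Ahat P Ept}
    (hopt : ∀ h, Vre ι ρ u γ π₁ h = ⨆ π : Policy Ahat P Ept, Vre ι ρ u γ π h)
    (h : Hist Ahat P Ept) (a : Act Ahat P) :
    Qre ι ρ u γ h a ≤ Vre ι ρ u γ π₁ h := by
  rw [hopt h]
  refine le_ciSup (f := fun π => Vre ι ρ u γ π h) ⟨(1 - γ)⁻¹, ?_⟩ fun _ => a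
  rintro _ ⟨π, rfl⟩
  exact (Qre_mem_Icc hρ hρsum hu hγ0 hγ1 h (π h)).2

theorem Vre_le_add_mul_of_optimal (hρ : ∀ wh aw e, 0 ≤ ρ wh aw e)
    (hρsum : ∀ wh aw, ∑ e, ρ wh aw e = 1) (hu : ∀ wh, u wh ∈ Set.Icc (0 : ℝ) 1)
    (hγ0 : 0 ≤ γ) (hγ1 : γ < 1) {π₁ : Policy Ahat P Ept} {p₁ : P} (hp₁ : ι p₁ = π₁)
    (hopt : ∀ h, Vre ι ρ u γ π₁ h = ⨆ π : Policy Ahat P Ept, Vre ι ρ u γ π h) {c : ℝ}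
    (hc : ∀ g g' : Hist Ahat P Ept, hworld g = hworld g' →
      Vre ι ρ u γ π₁ g ≤ Vre ι ρ u γ π₁ g' + c)
    {h h' : Hist Ahat P Ept} (hw : hworld h = hworld h') :
    Vre ι ρ u γ π₁ h ≤ Vre ι ρ u γ π₁ h' + γ * c := by
  subst hp₁
  set a := ι p₁ h
  set b : Act Ahat P := (a.1, p₁)
  have hbell := Qre_eq_EUre_zero_add (ι := ι) hρ hρsum hu hγ0 hγ1
  calc Vre ι ρ u γ (ι p₁) h
      = EUre ι ρ u h a 0 + γ * ∑ e, ρ (hworld h) a.1 e * Vre ι ρ u γ (ι a.2) (h ++ [(a, e)]) :=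
        hbell h a
    _ ≤ EUre ι ρ u h a 0 +
          γ * ∑ e, ρ (hworld h) a.1 e * (Vre ι ρ u γ (ι p₁) (h' ++ [(b, e)]) + c) := by
        gcongr with e
        · exact hρ _ _ _
        refine (Qre_le_Vre_of_optimal hρ hρsum hu hγ0 hγ1 hopt _ _).trans (hc _ _ ?_)
        rw [hworld_append, hworld_append, hw]
    _ = EUre ι ρ u h' b 0 +
          γ * ∑ e, ρ (hworld h') a.1 e * Vre ι ρ u γ (ι p₁) (h' ++ [(b, e)]) + γ * c := by
        rw [EUre_zero_congr (a := a) (a' := b) hw rfl, ← hw]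
        simp only [mul_add, Finset.sum_add_distrib, ← Finset.sum_mul, hρsum, one_mul]
        ring
    _ = Qre ι ρ u γ h' b + γ * c := by rw [hbell h' b]
    _ ≤ Vre ι ρ u γ (ι p₁) h' + γ * c := by
        gcongr
        exact Qre_le_Vre_of_optimal hρ hρsum hu hγ0 hγ1 hopt h' b

theorem Vre_eq_of_hworld_eq_of_optimal (hρ : ∀ wh aw e, 0 ≤ ρ wh aw e)
    (hρsum : ∀ wh aw, ∑ e, ρ wh aw e = 1) (hu : ∀ wh, u wh ∈ Set.Icc (0 : ℝ) 1)
    (hγ0 : 0 ≤ γ) (hγ1 : γ < 1) {π₁ : Policy Ahat P Ept} {p₁ : P} (hp₁ : ι p₁ = π₁)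
    (hopt : ∀ h, Vre ι ρ u γ π₁ h = ⨆ π : Policy Ahat P Ept, Vre ι ρ u γ π h)
    {h h' : Hist Ahat P Ept} (hw : hworld h = hworld h') :
    Vre ι ρ u γ π₁ h = Vre ι ρ u γ π₁ h' := by
  have bound (n : ℕ) : ∀ g g' : Hist Ahat P Ept, hworld g = hworld g' →
      Vre ι ρ u γ π₁ g ≤ Vre ι ρ u γ π₁ g' + γ ^ n * (1 - γ)⁻¹ := by
    induction n with
    | zero =>
      intro g g' _
      have hg := Qre_mem_Icc (ι := ι) hρ hρsum hu hγ0 hγ1 g (π₁ g)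
      have hg' := Qre_mem_Icc (ι := ι) hρ hρsum hu hγ0 hγ1 g' (π₁ g')
      rw [pow_zero, one_mul]
      exact hg.2.trans (le_add_of_nonneg_left hg'.1)
    | succ n ih =>
      intro g g' hgw
      rw [pow_succ', mul_assoc]
      exact Vre_le_add_mul_of_optimal hρ hρsum hu hγ0 hγ1 hp₁ hopt ih hgw
  have le_of_hworld_eq {g g' : Hist Ahat P Ept} (hgw : hworld g = hworld g') :
      Vre ι ρ u γ π₁ g ≤ Vre ι ρ u γ π₁ g' := by
    have hlim : Filter.Tendsto (fun n : ℕ => Vre ι ρ u γ π₁ g' + γ ^ n * (1 - γ)⁻¹)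
        Filter.atTop (nhds (Vre ι ρ u γ π₁ g')) := by
      simpa using ((tendsto_pow_atTop_nhds_zero_of_lt_one hγ0 hγ1).mul_const
        (1 - γ)⁻¹).const_add (Vre ι ρ u γ π₁ g')
    exact ge_of_tendsto' hlim fun n => bound n g g' hgw
  exact le_antisymm (le_of_hworld_eq hw) (le_of_hworld_eq hw.symm)

theorem Vre_next_eq_of_Qre_eq (hρpos : ∀ wh aw e, 0 < ρ wh aw e)
    (hρsum : ∀ wh aw, ∑ e, ρ wh aw e = 1) (hu : ∀ wh, u wh ∈ Set.Icc (0 : ℝ) 1)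
    (hγ0 : 0 < γ) (hγ1 : γ < 1) {π₁ : Policy Ahat P Ept} {p₁ : P} (hp₁ : ι p₁ = π₁)
    (hopt : ∀ h, Vre ι ρ u γ π₁ h = ⨆ π : Policy Ahat P Ept, Vre ι ρ u γ π h)
    {h : Hist Ahat P Ept} {a : Act Ahat P} (hQ : Qre ι ρ u γ h a = Vre ι ρ u γ π₁ h) (e : Ept) :
    Vre ι ρ u γ (ι a.2) (h ++ [(a, e)]) = Vre ι ρ u γ π₁ (h ++ [(a, e)]) := by
  have hρ := fun wh aw e => (hρpos wh aw e).le
  have hle : ∀ e ∈ Finset.univ, ρ (hworld h) a.1 e * Vre ι ρ u γ (ι a.2) (h ++ [(a, e)]) ≤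
      ρ (hworld h) a.1 e * Vre ι ρ u γ π₁ (h ++ [(a, e)]) := fun e _ =>
    mul_le_mul_of_nonneg_left (Qre_le_Vre_of_optimal hρ hρsum hu hγ0.le hγ1 hopt _ _)
      (hρ _ _ _)
  -- `(â, p₁)` does as well as `a` in the first step and then continues optimally.
  have hge : ∑ e, ρ (hworld h) a.1 e * Vre ι ρ u γ π₁ (h ++ [(a, e)]) ≤
      ∑ e, ρ (hworld h) a.1 e * Vre ι ρ u γ (ι a.2) (h ++ [(a, e)]) := by
    have hb := Qre_le_Vre_of_optimal hρ hρsum hu hγ0.le hγ1 hopt h (a.1, p₁)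
    rw [← hQ, Qre_eq_EUre_zero_add hρ hρsum hu hγ0.le hγ1 h,
      Qre_eq_EUre_zero_add hρ hρsum hu hγ0.le hγ1 h a] at hb
    have hcont : ∀ e, Vre ι ρ u γ (ι p₁) (h ++ [((a.1, p₁), e)]) =
        Vre ι ρ u γ π₁ (h ++ [(a, e)]) := fun e => by
      rw [hp₁]
      exact Vre_eq_of_hworld_eq_of_optimal hρ hρsum hu hγ0.le hγ1 hp₁ hopt
        (by rw [hworld_append, hworld_append])
    simp only [hcont] at hb
    exact le_of_mul_le_mul_left (le_of_add_le_add_left hb) hγ0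
  have heq := (Finset.sum_eq_sum_iff_of_le hle).1 (le_antisymm (Finset.sum_le_sum hle) hge)
  exact mul_left_cancel₀ (hρpos _ _ _).ne' (heq e (Finset.mem_univ e))

theorem Vre_build_eq_of_optimal (hρpos : ∀ wh aw e, 0 < ρ wh aw e)
    (hρsum : ∀ wh aw, ∑ e, ρ wh aw e = 1) (hu : ∀ wh, u wh ∈ Set.Icc (0 : ℝ) 1)
    (hγ0 : 0 < γ) (hγ1 : γ < 1) {π₁ : Policy Ahat P Ept} {p₁ : P} (hp₁ : ι p₁ = π₁)
    (hopt : ∀ h, Vre ι ρ u γ π₁ h = ⨆ π : Policy Ahat P Ept, Vre ι ρ u γ π h)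
    (es : List Ept) {h : Hist Ahat P Ept} {π : Policy Ahat P Ept}
    (hπ : Vre ι ρ u γ π h = Vre ι ρ u γ π₁ h) :
    Vre ι ρ u γ (build ι h π es).2 (build ι h π es).1 =
      Vre ι ρ u γ π₁ (build ι h π es).1 := by
  induction es generalizing h π with
  | nil => exact hπ
  | cons e es ih => exact ih (Vre_next_eq_of_Qre_eq hρpos hρsum hu hγ0 hγ1 hp₁ hopt hπ e)

end Realistic

theorem realistic_agents_safe_modifications_general
    {Ahat P Ept : Type*} [Fintype Ept]
    (ι : P → Policy Ahat P Ept)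
    (ρ : List (Ahat × Ept) → Ahat → Ept → ℝ)
    (hρpos : ∀ wh (aw : Ahat) (e : Ept), 0 < ρ wh aw e)
    (hρsum : ∀ wh (aw : Ahat), ∑ e, ρ wh aw e = 1)
    (u : List (Ahat × Ept) → ℝ)
    (hu : ∀ wh, u wh ∈ Set.Icc (0 : ℝ) 1)
    (γ : ℝ) (hγ0 : 0 < γ) (hγ1 : γ < 1)
    (π1 : Policy Ahat P Ept) (p1 : P) (hp1 : ι p1 = π1)
    (hopt : ∀ h : Hist Ahat P Ept,
      Vre ι ρ u γ π1 h = ⨆ π : Policy Ahat P Ept, Vre ι ρ u γ π h)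
    (es : List Ept) :
    Qre ι ρ u γ (build ι [] π1 es).1
        ((build ι [] π1 es).2 (build ι [] π1 es).1) =
      Qre ι ρ u γ (build ι [] π1 es).1 (π1 (build ι [] π1 es).1) :=
  Vre_build_eq_of_optimal hρpos hρsum hu hγ0 hγ1 hp1 hopt es rfl

/-- **Realistic policy-modifying agents make safe modifications.** -/
theorem realistic_agents_safe_modifications
    {Ahat P Ept : Type*} [Fintype Ahat] [Nonempty Ahat] [Fintype Ept] [Nonempty Ept]
    (ι : P → Policy Ahat P Ept)
    (ρ : List (Ahat × Ept) → Ahat → Ept → ℝ)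
    (hρpos : ∀ wh (aw : Ahat) (e : Ept), 0 < ρ wh aw e)
    (hρsum : ∀ wh (aw : Ahat), ∑ e, ρ wh aw e = 1)
    (u : List (Ahat × Ept) → ℝ)
    (hu : ∀ wh, u wh ∈ Set.Icc (0 : ℝ) 1)
    (γ : ℝ) (hγ0 : 0 < γ) (hγ1 : γ < 1)
    (π1 : Policy Ahat P Ept) (p1 : P) (hp1 : ι p1 = π1)
    (hopt : ∀ h : Hist Ahat P Ept,
      Vre ι ρ u γ π1 h = ⨆ π : Policy Ahat P Ept, Vre ι ρ u γ π h)
    (es : List Ept) :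
    Qre ι ρ u γ (build ι [] π1 es).1
        ((build ι [] π1 es).2 (build ι [] π1 es).1) =
      Qre ι ρ u γ (build ι [] π1 es).1 (π1 (build ι [] π1 es).1) :=
  realistic_agents_safe_modifications_general ι ρ hρpos hρsum u hu γ hγ0 hγ1 π1 p1 hp1 hopt es

end Stmt3
end
end

section
/- In the policy self-modification model with a modification-independent belief ρ, let π be a deterministic policy and let π̂ be its associated world policy. Then the realistic measure ρ^π_re and the standard measure ρ^π̂ induce the same distribution on world histories: for every world history âê_{<t}, ρ^π̂(âê_{<t}) equals the ρ^π_re-probability of the set of histories whose world part is âê_{<t}. -/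
/-!
STATEMENT 7 (Everitt et al., Lemma "Value-equivalence with standard model",
first part).

Policy self-modification model: world actions `Ahat` (finite), percepts `Ept`
(finite), policy names `P` with naming map `ι : P → Policy`.  The belief `ρ`
is modification-independent (enforced by its type).  Given an initial
(deterministic) policy `π`, the realistic measure `ρ^π_re` takes each action
deterministically from the policy currently in force (initially `π`, then the
policy named by the preceding action) and samples each percept from `ρ`; its
restriction to finite histories is the function `probRe ι ρ π []`.  For a
world policy `pw : world histories → Ahat`, the induced measure `ρ^pw` on
world histories is `probW ρ pw []`.

A world policy `pw` is an *associated world policy* of `π` if for every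
history `h` with positive `ρ^π_re`-probability, `pw` applied to the world part
of `h` is the world-action component of the action that the policy in force
after `h` (namely `polAt ι π h`) takes at `h`; on world histories without a
positive-probability extension `pw` is arbitrary.

Claim: `ρ^π_re` and `ρ^pw` induce the same distribution on world histories:
for every world history `wh`, `ρ^pw(wh)` equals the total
`ρ^π_re`-probability of the set of histories whose world part is `wh`.
-/

noncomputable section

namespace Stmt7

/-- Actions: a world action together with the name of the policy selected for
the next step. -/
abbrev Act (Ahat P : Type*) : Type _ := Ahat × P

/-- Histories: finite sequences of action–percept pairs. -/
abbrev Hist (Ahat P Ept : Type*) : Type _ := List (Act Ahat P × Ept)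

/-- Policies: maps from histories to actions. -/
abbrev Policy (Ahat P Ept : Type*) : Type _ := Hist Ahat P Ept → Act Ahat P

/-- The world part of a history (policy-name components deleted). -/
def hworld {Ahat P Ept : Type*} (h : Hist Ahat P Ept) : List (Ahat × Ept) :=
  h.map fun pe => (pe.1.1, pe.2)

/-- A function on histories is modification-independent if its value depends
only on the world part of its argument. -/
def ModIndep {Ahat P Ept α : Type*} (f : Hist Ahat P Ept → α) : Prop :=
  ∀ h h' : Hist Ahat P Ept, hworld h = hworld h' → f h = f h'


/-- The policy in force immediately after history `h`: the initial policy `π`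
if `h` is empty, otherwise the policy named by the last action of `h`. -/
def polAt {Ahat P Ept : Type*} (ι : P → Policy Ahat P Ept)
    (π : Policy Ahat P Ept) (h : Hist Ahat P Ept) : Policy Ahat P Ept :=
  match h.getLast? with
  | none => π
  | some ae => ι ae.1.2

open Classical in
/-- `probRe ι ρ π pre h` is the probability, under the realistic measure
started from the history `pre` with current policy `π`, that the next
`h.length` action–percept pairs are exactly `h` (actions are taken
deterministically by the evolving policies, percepts are sampled from `ρ`).
In particular `probRe ι ρ π [] h` is the `ρ^π_re`-probability of the history
`h`. -/
noncomputable def probRe {Ahat P Ept : Type*} (ι : P → Policy Ahat P Ept)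
    (ρ : List (Ahat × Ept) → Ahat → Ept → ℝ) :
    Policy Ahat P Ept → Hist Ahat P Ept → Hist Ahat P Ept → ℝ
  | _, _, [] => 1
  | π, pre, ae :: rest =>
      (if π pre = ae.1 then ρ (hworld pre) ae.1.1 ae.2 else 0) *
        probRe ι ρ (ι ae.1.2) (pre ++ [ae]) rest

open Classical in
/-- `probW ρ pw pre wh` is the probability, under the measure `ρ^pw` induced
by the world policy `pw` and the belief `ρ`, that the `wh.length` world
action–percept pairs following the world history `pre` are exactly `wh`.
In particular `probW ρ pw [] wh` is `ρ^pw(wh)`. -/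
noncomputable def probW {Ahat Ept : Type*}
    (ρ : List (Ahat × Ept) → Ahat → Ept → ℝ)
    (pw : List (Ahat × Ept) → Ahat) :
    List (Ahat × Ept) → List (Ahat × Ept) → ℝ
  | _, [] => 1
  | pre, ae :: rest =>
      (if pw pre = ae.1 then ρ pre ae.1 ae.2 else 0) *
        probW ρ pw (pre ++ [ae]) rest

/-! Since the policies are deterministic, a world history `wh` has exactly one lift to a full
history that can have positive `ρ^π_re`-probability: the one whose policy names are those chosen
by the policies in force along the way (`liftHist`). So the sum over the fiber of `wh` collapses
to the probability of this lift, and along the lift the realistic measure chooses the same world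
actions as `pw` and draws percepts from the same `ρ`, since `pw` agrees with the policy in force
at every history of positive probability. -/

section

variable {Ahat P Ept : Type*} (ι : P → Policy Ahat P Ept)
  {ρ : List (Ahat × Ept) → Ahat → Ept → ℝ}

@[simp]
lemma hworld_nil : hworld ([] : Hist Ahat P Ept) = [] := rfl

@[simp]
lemma hworld_cons (x : Act Ahat P × Ept) (h : Hist Ahat P Ept) :
    hworld (x :: h) = (x.1.1, x.2) :: hworld h := rfl

@[simp]
lemma hworld_append (h h' : Hist Ahat P Ept) :
    hworld (h ++ h') = hworld h ++ hworld h' := List.map_append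

@[simp]
lemma polAt_nil (π : Policy Ahat P Ept) : polAt ι π [] = π := rfl

@[simp]
lemma polAt_concat (π : Policy Ahat P Ept) (h : Hist Ahat P Ept)
    (x : Act Ahat P × Ept) : polAt ι π (h ++ [x]) = ι x.1.2 := by
  simp [polAt]

def liftHist :
    Policy Ahat P Ept → Hist Ahat P Ept → List (Ahat × Ept) → Hist Ahat P Ept
  | _, _, [] => []
  | π, pre, (a, e) :: wh =>
      ((a, (π pre).2), e) :: liftHist (ι (π pre).2) (pre ++ [((a, (π pre).2), e)]) wh

@[simp]
lemma hworld_liftHist :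
    ∀ (π : Policy Ahat P Ept) (pre : Hist Ahat P Ept) (wh : List (Ahat × Ept)),
      hworld (liftHist ι π pre wh) = wh
  | _, _, [] => rfl
  | π, pre, (a, e) :: wh => by simp [liftHist, hworld_liftHist _ _ wh]

lemma probRe_eq_zero_of_ne_liftHist :
    ∀ {π : Policy Ahat P Ept} {pre t : Hist Ahat P Ept} {wh : List (Ahat × Ept)},
      hworld t = wh → t ≠ liftHist ι π pre wh → probRe ι ρ π pre t = 0
  | _, _, [], _, hwt, hne => by subst hwt; exact absurd rfl hne
  | π, pre, ((a', p), e') :: t, _, hwt, hne => by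
      subst hwt
      by_cases hchoice : π pre = (a', p)
      · have htail : t ≠ liftHist ι (ι p) (pre ++ [((a', p), e')]) (hworld t) := by
          intro htl
          exact hne (by simp only [hworld_cons, liftHist, hchoice]; exact congrArg _ htl)
        rw [probRe, probRe_eq_zero_of_ne_liftHist rfl htail, mul_zero]
      · rw [probRe, if_neg hchoice, zero_mul]

lemma tsum_probRe_fiber (π : Policy Ahat P Ept) (pre : Hist Ahat P Ept)
    (wh : List (Ahat × Ept)) :
    ∑' t : {t : Hist Ahat P Ept // hworld t = wh}, probRe ι ρ π pre t =
      probRe ι ρ π pre (liftHist ι π pre wh) :=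
  tsum_eq_single (⟨_, hworld_liftHist ι π pre wh⟩ : {t : Hist Ahat P Ept // hworld t = wh})
    fun t ht => probRe_eq_zero_of_ne_liftHist ι t.2 fun h => ht (Subtype.ext h)

lemma probW_eq_probRe_liftHist (hρpos : ∀ wh (aw : Ahat) (e : Ept), 0 < ρ wh aw e)
    (pw : List (Ahat × Ept) → Ahat) (π : Policy Ahat P Ept) :
    ∀ (wh : List (Ahat × Ept)) (pre : Hist Ahat P Ept),
      (∀ t : Hist Ahat P Ept, 0 < probRe ι ρ (polAt ι π pre) pre t →
        pw (hworld (pre ++ t)) = (polAt ι π (pre ++ t) (pre ++ t)).1) →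
      probW ρ pw (hworld pre) wh =
        probRe ι ρ (polAt ι π pre) pre (liftHist ι (polAt ι π pre) pre wh)
  | [], _, _ => by simp [probW, liftHist, probRe]
  | (a, e) :: wh, pre, hassoc => by
      set σ := polAt ι π pre
      have hpw : pw (hworld pre) = (σ pre).1 := by
        simpa using hassoc [] (by simp [probRe])
      by_cases ha : (σ pre).1 = a
      · set x : Act Ahat P × Ept := ((a, (σ pre).2), e)
        have hσx : σ pre = x.1 := by simp [x, ← ha]
        have hassoc' : ∀ t : Hist Ahat P Ept,
            0 < probRe ι ρ (polAt ι π (pre ++ [x])) (pre ++ [x]) t →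
              pw (hworld (pre ++ [x] ++ t)) =
                (polAt ι π (pre ++ [x] ++ t) (pre ++ [x] ++ t)).1 := by
          intro t ht
          have hpos : 0 < probRe ι ρ σ pre (x :: t) := by
            rw [probRe, if_pos hσx]
            exact mul_pos (hρpos _ _ _) (by simpa using ht)
          simpa using hassoc (x :: t) hpos
        have ih := probW_eq_probRe_liftHist hρpos pw π wh (pre ++ [x]) hassoc'
        simp only [polAt_concat, hworld_append] at ih
        rw [liftHist, probW, probRe, if_pos (hpw.trans ha), if_pos hσx, ← ih]
        rfl
      · have hσ : σ pre ≠ (a, (σ pre).2) := fun h => ha (congrArg Prod.fst h)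
        rw [liftHist, probW, probRe, if_neg (hpw.trans_ne ha), if_neg hσ, zero_mul, zero_mul]

end

theorem realistic_measure_eq_world_measure_general
    {Ahat P Ept : Type*}
    (ι : P → Policy Ahat P Ept)
    (ρ : List (Ahat × Ept) → Ahat → Ept → ℝ)
    (hρpos : ∀ wh (aw : Ahat) (e : Ept), 0 < ρ wh aw e)
    (π : Policy Ahat P Ept)
    (pw : List (Ahat × Ept) → Ahat)
    (hassoc : ∀ h : Hist Ahat P Ept,
      0 < probRe ι ρ π [] h → pw (hworld h) = ((polAt ι π h) h).1)
    (wh : List (Ahat × Ept)) :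
    probW ρ pw [] wh =
      ∑' h : {h : Hist Ahat P Ept // hworld h = wh}, probRe ι ρ π [] h.1 := by
  rw [tsum_probRe_fiber]
  simpa using probW_eq_probRe_liftHist ι hρpos pw π wh [] (by simpa using hassoc)

/-- **The realistic measure and the associated-world-policy measure agree on
world histories.** -/
theorem realistic_measure_eq_world_measure
    {Ahat P Ept : Type*} [Fintype Ahat] [Nonempty Ahat] [Fintype Ept] [Nonempty Ept]
    (ι : P → Policy Ahat P Ept)
    (ρ : List (Ahat × Ept) → Ahat → Ept → ℝ)
    (hρpos : ∀ wh (aw : Ahat) (e : Ept), 0 < ρ wh aw e)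
    (hρsum : ∀ wh (aw : Ahat), ∑ e, ρ wh aw e = 1)
    (π : Policy Ahat P Ept)
    (pw : List (Ahat × Ept) → Ahat)
    (hassoc : ∀ h : Hist Ahat P Ept,
      0 < probRe ι ρ π [] h → pw (hworld h) = ((polAt ι π h) h).1)
    (wh : List (Ahat × Ept)) :
    probW ρ pw [] wh =
      ∑' h : {h : Hist Ahat P Ept // hworld h = wh}, probRe ι ρ π [] h.1 :=
  realistic_measure_eq_world_measure_general ι ρ hρpos π pw hassoc wh

end Stmt7
end
end

section
/- In the policy self-modification model with modification-independent belief ρ and modification-independent initial utility function u_1, let π be a deterministic policy and let π̂ be its associated world policy. Then the realistic value of π equals the standard value of π̂: Q^re_1(ε, π(ε)) = Q^π̂(ε, π̂(ε)), where ε is the empty history. -/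
/-!
STATEMENT 8 (Everitt et al., Lemma "Value-equivalence with standard model",
second part).

Policy self-modification model: world actions `Ahat` (finite), percepts `Ept`
(finite), policy names `P` with naming map `ι : P → Policy`.  The belief `ρ`
and the initial utility function `u` are modification-independent (enforced by
their types).

`Qre ι ρ u γ ε (π ε)` is the `ρ^π_re`-expected value of
`Σ_{k≥1} γ^{k-1} u(world history up to k)` (realistic value of `π` at the
empty history `ε = []`), formalised via the `n`-step expectations `EUre`.
For a world policy `pw`, `Qw ρ u γ pw ε (pw ε)` is the `ρ^pw`-expected value
of the same sum (standard value), formalised via `EUw`.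

A world policy `pw` is an *associated world policy* of the deterministic
policy `π` if for every history `h` of positive `ρ^π_re`-probability
(`probRe ι ρ π [] h > 0`), `pw` applied to the world part of `h` equals the
world-action component of the action taken at `h` by the policy in force
after `h` (`polAt ι π h`); it is arbitrary elsewhere.

Claim: the realistic value of `π` equals the standard value of `pw`:
`Q^re_1(ε, π(ε)) = Q^pw(ε, pw(ε))`.
-/

noncomputable section

namespace Stmt8

/-- Actions: a world action together with the name of the policy selected for
the next step. -/
abbrev Act (Ahat P : Type*) : Type _ := Ahat × P

/-- Histories: finite sequences of action–percept pairs. -/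
abbrev Hist (Ahat P Ept : Type*) : Type _ := List (Act Ahat P × Ept)

/-- Policies: maps from histories to actions. -/
abbrev Policy (Ahat P Ept : Type*) : Type _ := Hist Ahat P Ept → Act Ahat P

/-- The world part of a history (policy-name components deleted). -/
def hworld {Ahat P Ept : Type*} (h : Hist Ahat P Ept) : List (Ahat × Ept) :=
  h.map fun pe => (pe.1.1, pe.2)

/-- A function on histories is modification-independent if its value depends
only on the world part of its argument. -/
def ModIndep {Ahat P Ept α : Type*} (f : Hist Ahat P Ept → α) : Prop :=
  ∀ h h' : Hist Ahat P Ept, hworld h = hworld h' → f h = f h'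


/-- The policy in force immediately after history `h`: the initial policy `π`
if `h` is empty, otherwise the policy named by the last action of `h`. -/
def polAt {Ahat P Ept : Type*} (ι : P → Policy Ahat P Ept)
    (π : Policy Ahat P Ept) (h : Hist Ahat P Ept) : Policy Ahat P Ept :=
  match h.getLast? with
  | none => π
  | some ae => ι ae.1.2

open Classical in
/-- `probRe ι ρ π pre h` is the probability, under the realistic measure
started from the history `pre` with current policy `π`, that the next
`h.length` action–percept pairs are exactly `h` (actions are taken
deterministically by the evolving policies, percepts are sampled from `ρ`).
In particular `probRe ι ρ π [] h` is the `ρ^π_re`-probability of the history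
`h`. -/
noncomputable def probRe {Ahat P Ept : Type*} (ι : P → Policy Ahat P Ept)
    (ρ : List (Ahat × Ept) → Ahat → Ept → ℝ) :
    Policy Ahat P Ept → Hist Ahat P Ept → Hist Ahat P Ept → ℝ
  | _, _, [] => 1
  | π, pre, ae :: rest =>
      (if π pre = ae.1 then ρ (hworld pre) ae.1.1 ae.2 else 0) *
        probRe ι ρ (ι ae.1.2) (pre ++ [ae]) rest

open Classical in
/-- `probW ρ pw pre wh` is the probability, under the measure `ρ^pw` induced
by the world policy `pw` and the belief `ρ`, that the `wh.length` world
action–percept pairs following the world history `pre` are exactly `wh`.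
In particular `probW ρ pw [] wh` is `ρ^pw(wh)`. -/
noncomputable def probW {Ahat Ept : Type*}
    (ρ : List (Ahat × Ept) → Ahat → Ept → ℝ)
    (pw : List (Ahat × Ept) → Ahat) :
    List (Ahat × Ept) → List (Ahat × Ept) → ℝ
  | _, [] => 1
  | pre, ae :: rest =>
      (if pw pre = ae.1 then ρ pre ae.1 ae.2 else 0) *
        probW ρ pw (pre ++ [ae]) rest

/-- `EUre ι ρ u h a n`: expected `u`-utility received `n` steps after taking
action `a` following history `h`, with percepts sampled from `ρ` and every
future action taken by the policy selected by the preceding action (the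
realistic measure `ρ_re`). -/
def EUre {Ahat P Ept : Type*} [Fintype Ept] (ι : P → Policy Ahat P Ept)
    (ρ : List (Ahat × Ept) → Ahat → Ept → ℝ) (u : List (Ahat × Ept) → ℝ) :
    Hist Ahat P Ept → Act Ahat P → ℕ → ℝ
  | h, a, 0 => ∑ e, ρ (hworld h) a.1 e * u (hworld h ++ [(a.1, e)])
  | h, a, n + 1 =>
      ∑ e, ρ (hworld h) a.1 e *
        EUre ι ρ u (h ++ [(a, e)]) (ι a.2 (h ++ [(a, e)])) n

/-- The realistic `Q`-value: expected discounted `u`-utility when all future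
actions are chosen by the policies selected through self-modification. -/
def Qre {Ahat P Ept : Type*} [Fintype Ept] (ι : P → Policy Ahat P Ept)
    (ρ : List (Ahat × Ept) → Ahat → Ept → ℝ) (u : List (Ahat × Ept) → ℝ)
    (γ : ℝ) (h : Hist Ahat P Ept) (a : Act Ahat P) : ℝ :=
  ∑' n : ℕ, γ ^ n * EUre ι ρ u h a n

/-- The realistic `V`-value of a policy `π` (a policy argument beyond the next
action is superfluous, since the action determines the next policy). -/
def Vre {Ahat P Ept : Type*} [Fintype Ept] (ι : P → Policy Ahat P Ept)
    (ρ : List (Ahat × Ept) → Ahat → Ept → ℝ) (u : List (Ahat × Ept) → ℝ)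
    (γ : ℝ) (π : Policy Ahat P Ept) (h : Hist Ahat P Ept) : ℝ :=
  Qre ι ρ u γ h (π h)

/-- `EUw ρ u pw wh aw n`: in the standard (non-modifying) model, the expected
`u`-utility received `n` steps after taking world action `aw` following world
history `wh`, with percepts sampled from `ρ` and future actions taken by the
world policy `pw`. -/
def EUw {Ahat Ept : Type*} [Fintype Ept]
    (ρ : List (Ahat × Ept) → Ahat → Ept → ℝ) (u : List (Ahat × Ept) → ℝ)
    (pw : List (Ahat × Ept) → Ahat) :
    List (Ahat × Ept) → Ahat → ℕ → ℝ
  | wh, aw, 0 => ∑ e, ρ wh aw e * u (wh ++ [(aw, e)])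
  | wh, aw, n + 1 =>
      ∑ e, ρ wh aw e *
        EUw ρ u pw (wh ++ [(aw, e)]) (pw (wh ++ [(aw, e)])) n

/-- The standard `Q`-value of a world policy `pw`. -/
def Qw {Ahat Ept : Type*} [Fintype Ept]
    (ρ : List (Ahat × Ept) → Ahat → Ept → ℝ) (u : List (Ahat × Ept) → ℝ)
    (γ : ℝ) (pw : List (Ahat × Ept) → Ahat)
    (wh : List (Ahat × Ept)) (aw : Ahat) : ℝ :=
  ∑' n : ℕ, γ ^ n * EUw ρ u pw wh aw n

/-! The action taken along a history of positive realistic probability has world part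
`pw (hworld h)`, so by induction on the horizon the `n`-step realistic expected utility
from such a history is the `n`-step standard expected utility of `pw` from its world
part; full support of `ρ` keeps every history reached this way of positive probability.
The discounted sums then agree term by term. -/

section

variable {Ahat P Ept : Type*}

lemma hworld_append (h h' : Hist Ahat P Ept) : hworld (h ++ h') = hworld h ++ hworld h' :=
  List.map_append

lemma polAt_cons (ι : P → Policy Ahat P Ept) (π : Policy Ahat P Ept)
    (ae : Act Ahat P × Ept) (h : Hist Ahat P Ept) :
    polAt ι π (ae :: h) = polAt ι (ι ae.1.2) h := by
  simp only [polAt, List.getLast?_cons]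
  cases h.getLast? <;> rfl

lemma polAt_concat (ι : P → Policy Ahat P Ept) (π : Policy Ahat P Ept)
    (h : Hist Ahat P Ept) (ae : Act Ahat P × Ept) :
    polAt ι π (h ++ [ae]) = ι ae.1.2 := by
  simp [polAt]

variable (ι : P → Policy Ahat P Ept) (ρ : List (Ahat × Ept) → Ahat → Ept → ℝ)

lemma probRe_append (σ : Policy Ahat P Ept) (pre h₁ h₂ : Hist Ahat P Ept) :
    probRe ι ρ σ pre (h₁ ++ h₂) =
      probRe ι ρ σ pre h₁ * probRe ι ρ (polAt ι σ h₁) (pre ++ h₁) h₂ := by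
  induction h₁ generalizing σ pre with
  | nil => simp [probRe, polAt]
  | cons ae h₁ ih =>
    simp only [List.cons_append, probRe, polAt_cons, ih, mul_assoc, List.append_assoc,
      List.nil_append]

lemma probRe_concat_polAt (σ : Policy Ahat P Ept) (h : Hist Ahat P Ept) (e : Ept) :
    probRe ι ρ σ [] (h ++ [(polAt ι σ h h, e)]) =
      probRe ι ρ σ [] h * ρ (hworld h) (polAt ι σ h h).1 e := by
  simp [probRe_append, probRe]

lemma EUre_polAt_eq_EUw (hρpos : ∀ wh aw e, 0 < ρ wh aw e) (u : List (Ahat × Ept) → ℝ)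
    [Fintype Ept] (π : Policy Ahat P Ept) (pw : List (Ahat × Ept) → Ahat)
    (hassoc : ∀ h : Hist Ahat P Ept,
      0 < probRe ι ρ π [] h → pw (hworld h) = ((polAt ι π h) h).1)
    (n : ℕ) (h : Hist Ahat P Ept) (hpos : 0 < probRe ι ρ π [] h) :
    EUre ι ρ u h (polAt ι π h h) n = EUw ρ u pw (hworld h) (pw (hworld h)) n := by
  induction n generalizing h with
  | zero => simp [EUre, EUw, hassoc h hpos]
  | succ n ih =>
    simp only [EUre, EUw, hassoc h hpos]
    refine Finset.sum_congr rfl fun e _ => congrArg _ ?_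
    have hpos' := probRe_concat_polAt ι ρ π h e ▸ mul_pos hpos (hρpos _ _ e)
    have step := ih _ hpos'
    rwa [polAt_concat, hworld_append] at step

end

theorem realistic_value_eq_world_value_general
    {Ahat P Ept : Type*} [Fintype Ept]
    (ι : P → Policy Ahat P Ept)
    (ρ : List (Ahat × Ept) → Ahat → Ept → ℝ)
    (hρpos : ∀ wh (aw : Ahat) (e : Ept), 0 < ρ wh aw e)
    (u : List (Ahat × Ept) → ℝ)
    (γ : ℝ)
    (π : Policy Ahat P Ept)
    (pw : List (Ahat × Ept) → Ahat)
    (hassoc : ∀ h : Hist Ahat P Ept,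
      0 < probRe ι ρ π [] h → pw (hworld h) = ((polAt ι π h) h).1) :
    Qre ι ρ u γ [] (π []) = Qw ρ u γ pw [] (pw []) :=
  tsum_congr fun n => congrArg (γ ^ n * ·) <|
    EUre_polAt_eq_EUw ι ρ hρpos u π pw hassoc n [] (by simp [probRe])

/-- **Value-equivalence with the standard model.** -/
theorem realistic_value_eq_world_value
    {Ahat P Ept : Type*} [Fintype Ahat] [Nonempty Ahat] [Fintype Ept] [Nonempty Ept]
    (ι : P → Policy Ahat P Ept)
    (ρ : List (Ahat × Ept) → Ahat → Ept → ℝ)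
    (hρpos : ∀ wh (aw : Ahat) (e : Ept), 0 < ρ wh aw e)
    (hρsum : ∀ wh (aw : Ahat), ∑ e, ρ wh aw e = 1)
    (u : List (Ahat × Ept) → ℝ)
    (hu : ∀ wh, u wh ∈ Set.Icc (0 : ℝ) 1)
    (γ : ℝ) (hγ0 : 0 < γ) (hγ1 : γ < 1)
    (π : Policy Ahat P Ept)
    (pw : List (Ahat × Ept) → Ahat)
    (hassoc : ∀ h : Hist Ahat P Ept,
      0 < probRe ι ρ π [] h → pw (hworld h) = ((polAt ι π h) h).1) :
    Qre ι ρ u γ [] (π []) = Qw ρ u γ pw [] (pw []) :=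
  realistic_value_eq_world_value_general ι ρ hρpos u γ π pw hassoc

end Stmt8
end
end

section
/- In the self-modification model with modification-independent belief ρ, for any modification-independent instantaneous utility function u_t there exists a policy π* that is modification-independent, non-modifying (it always selects itself as the next policy), and optimal with respect to the realistic value function V^re_t, i.e. V^{re,π*}_t(h) = sup over policies π of V^{re,π}_t(h) for every history h. -/
/-!
STATEMENT 9 (Everitt et al., Theorem "Optimal policy existence").

Policy self-modification model: world actions `Ahat` (finite), percepts `Ept`
(finite), policy names `P` with naming map `ι : P → Policy`.  The belief `ρ`
and the instantaneous utility function `u` are modification-independent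
(enforced by their types).  The realistic value functions `Qre`/`Vre` give the
expected discounted `u`-utility where future actions are chosen by the
policies selected by the preceding actions.

As in the paper, non-modifying policies built from world policies are
nameable: for every world policy `pw : world histories → Ahat` there is a name
`p` with `ι p = fun h => (pw (world part of h), p)`, i.e. the lifted policy
that plays `pw` and always selects itself (hypothesis `hname`; in the paper's
utility-modification instantiation every utility function names its optimal
policy, and in the policy-modification instantiation names can be added, so
this is part of the model).

Claim: there exists a policy `π*` that is modification-independent,
non-modifying (on every history it selects a name mapping to itself, i.e.
`ι (π* h).2 = π*`), and optimal with respect to the realistic value function: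
`V^{re,π*}(h) = ⨆ π, V^{re,π}(h)` for every history `h`.
-/

noncomputable section

namespace Stmt9

/-- Actions: a world action together with the name of the policy selected for
the next step. -/
abbrev Act (Ahat P : Type*) : Type _ := Ahat × P

/-- Histories: finite sequences of action–percept pairs. -/
abbrev Hist (Ahat P Ept : Type*) : Type _ := List (Act Ahat P × Ept)

/-- Policies: maps from histories to actions. -/
abbrev Policy (Ahat P Ept : Type*) : Type _ := Hist Ahat P Ept → Act Ahat P

/-- The world part of a history (policy-name components deleted). -/
def hworld {Ahat P Ept : Type*} (h : Hist Ahat P Ept) : List (Ahat × Ept) :=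
  h.map fun pe => (pe.1.1, pe.2)

/-- A function on histories is modification-independent if its value depends
only on the world part of its argument. -/
def ModIndep {Ahat P Ept α : Type*} (f : Hist Ahat P Ept → α) : Prop :=
  ∀ h h' : Hist Ahat P Ept, hworld h = hworld h' → f h = f h'


/-- `EUre ι ρ u h a n`: expected `u`-utility received `n` steps after taking
action `a` following history `h`, with percepts sampled from `ρ` and every
future action taken by the policy selected by the preceding action (the
realistic measure `ρ_re`). -/
def EUre {Ahat P Ept : Type*} [Fintype Ept] (ι : P → Policy Ahat P Ept)
    (ρ : List (Ahat × Ept) → Ahat → Ept → ℝ) (u : List (Ahat × Ept) → ℝ) :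
    Hist Ahat P Ept → Act Ahat P → ℕ → ℝ
  | h, a, 0 => ∑ e, ρ (hworld h) a.1 e * u (hworld h ++ [(a.1, e)])
  | h, a, n + 1 =>
      ∑ e, ρ (hworld h) a.1 e *
        EUre ι ρ u (h ++ [(a, e)]) (ι a.2 (h ++ [(a, e)])) n

/-- The realistic `Q`-value: expected discounted `u`-utility when all future
actions are chosen by the policies selected through self-modification. -/
def Qre {Ahat P Ept : Type*} [Fintype Ept] (ι : P → Policy Ahat P Ept)
    (ρ : List (Ahat × Ept) → Ahat → Ept → ℝ) (u : List (Ahat × Ept) → ℝ)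
    (γ : ℝ) (h : Hist Ahat P Ept) (a : Act Ahat P) : ℝ :=
  ∑' n : ℕ, γ ^ n * EUre ι ρ u h a n

/-- The realistic `V`-value of a policy `π` (a policy argument beyond the next
action is superfluous, since the action determines the next policy). -/
def Vre {Ahat P Ept : Type*} [Fintype Ept] (ι : P → Policy Ahat P Ept)
    (ρ : List (Ahat × Ept) → Ahat → Ept → ℝ) (u : List (Ahat × Ept) → ℝ)
    (γ : ℝ) (π : Policy Ahat P Ept) (h : Hist Ahat P Ept) : ℝ :=
  Qre ι ρ u γ h (π h)

/-!
The belief and the utility ignore policy names, so the problem has an optimal value `V` on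
world histories alone: a fixed point of the Bellman optimality operator
`V wh = max_a ∑ e, ρ wh a e * (u (wh ++ [(a, e)]) + γ * V (wh ++ [(a, e)]))`.
That operator is monotone and maps `[0, (1 - γ)⁻¹]`-valued functions to themselves, so
Knaster–Tarski provides `V`. The greedy world policy for `V`, lifted to a policy that always
selects its own name, attains `V`, while every other policy stays below it: in both cases the
gap is bounded and is at most `γ` times an average of itself one step later, hence it is
nonpositive.
-/

open Finset Set

section General

theorem exists_isFixedPt_of_monotone_of_mapsTo_Icc {L : Type*} [ConditionallyCompleteLattice L]
    {a b : L} (hab : a ≤ b) {T : L → L} (hT : Monotone T) (hmaps : MapsTo T (Icc a b) (Icc a b)) :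
    ∃ x ∈ Icc a b, Function.IsFixedPt T x := by
  have : Fact (a ≤ b) := ⟨hab⟩
  let T' : Icc a b →o Icc a b := ⟨hmaps.restrict T _ _, fun _ _ hxy => hT hxy⟩
  exact ⟨T'.lfp, T'.lfp.2, congrArg Subtype.val T'.map_lfp⟩

theorem sum_mul_mem_Icc {E : Type*} [Fintype E] {w f : E → ℝ} {a b : ℝ} (hw0 : ∀ e, 0 ≤ w e)
    (hw1 : ∑ e, w e = 1) (hf : ∀ e, f e ∈ Icc a b) : ∑ e, w e * f e ∈ Icc a b := by
  simpa only [smul_eq_mul] using (convex_Icc a b).sum_mem (fun e _ => hw0 e) hw1 fun e _ => hf e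

theorem nonpos_of_le_mul_weighted_sum {ι E : Type*} [Fintype E] {f : ι → ℝ} {γ : ℝ}
    (hγ0 : 0 ≤ γ) (hγ1 : γ < 1) (hf : BddAbove (range f)) (w : ι → E → ℝ) (next : ι → E → ι)
    (hw0 : ∀ i e, 0 ≤ w i e) (hw1 : ∀ i, ∑ e, w i e = 1)
    (hle : ∀ i, f i ≤ γ * ∑ e, w i e * f (next i e)) (i : ι) : f i ≤ 0 := by
  have : Nonempty ι := ⟨i⟩
  have hstep : ∀ j, f j ≤ γ * ⨆ k, f k := fun j => by
    refine (hle j).trans (mul_le_mul_of_nonneg_left ?_ hγ0)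
    calc ∑ e, w j e * f (next j e) ≤ ∑ e, w j e * ⨆ k, f k :=
          sum_le_sum fun e _ => mul_le_mul_of_nonneg_left (le_ciSup hf _) (hw0 j e)
      _ = ⨆ k, f k := by rw [← sum_mul, hw1, one_mul]
  have hsup : (⨆ k, f k) ≤ 0 := by nlinarith [ciSup_le hstep]
  exact (le_ciSup hf i).trans hsup

theorem summable_pow_mul_of_mem_Icc {γ : ℝ} (hγ0 : 0 ≤ γ) (hγ1 : γ < 1) {F : ℕ → ℝ}
    (hF : ∀ n, F n ∈ Icc (0 : ℝ) 1) : Summable fun n => γ ^ n * F n :=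
  (summable_geometric_of_lt_one hγ0 hγ1).of_nonneg_of_le
    (fun n => mul_nonneg (pow_nonneg hγ0 n) (hF n).1)
    (fun n => mul_le_of_le_one_right (pow_nonneg hγ0 n) (hF n).2)

theorem tsum_pow_mul_mem_Icc {γ : ℝ} (hγ0 : 0 ≤ γ) (hγ1 : γ < 1) {F : ℕ → ℝ}
    (hF : ∀ n, F n ∈ Icc (0 : ℝ) 1) : ∑' n, γ ^ n * F n ∈ Icc 0 (1 - γ)⁻¹ := by
  refine ⟨tsum_nonneg fun n => mul_nonneg (pow_nonneg hγ0 n) (hF n).1, ?_⟩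
  rw [← tsum_geometric_of_lt_one hγ0 hγ1]
  exact (summable_pow_mul_of_mem_Icc hγ0 hγ1 hF).tsum_le_tsum
    (fun n => mul_le_of_le_one_right (pow_nonneg hγ0 n) (hF n).2)
    (summable_geometric_of_lt_one hγ0 hγ1)

end General

theorem hworld_append_singleton {Ahat P Ept : Type*} (h : Hist Ahat P Ept)
    (x : Act Ahat P × Ept) : hworld (h ++ [x]) = hworld h ++ [(x.1.1, x.2)] := by
  simp [hworld]

section ValueFunctions

variable {Ahat P Ept : Type*} [Fintype Ept]
  {ρ : List (Ahat × Ept) → Ahat → Ept → ℝ} {u : List (Ahat × Ept) → ℝ} {γ : ℝ}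

theorem EUre_mem_Icc (hρ0 : ∀ wh a e, 0 ≤ ρ wh a e) (hρ1 : ∀ wh a, ∑ e, ρ wh a e = 1)
    (hu : ∀ wh, u wh ∈ Icc (0 : ℝ) 1) (ι : P → Policy Ahat P Ept) (n : ℕ) :
    ∀ h a, EUre ι ρ u h a n ∈ Icc (0 : ℝ) 1 := by
  induction n with
  | zero => exact fun _ _ => sum_mul_mem_Icc (hρ0 _ _) (hρ1 _ _) fun _ => hu _
  | succ n ih => exact fun _ _ => sum_mul_mem_Icc (hρ0 _ _) (hρ1 _ _) fun _ => ih _ _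

theorem Qre_mem_Icc (hρ0 : ∀ wh a e, 0 ≤ ρ wh a e) (hρ1 : ∀ wh a, ∑ e, ρ wh a e = 1)
    (hu : ∀ wh, u wh ∈ Icc (0 : ℝ) 1) (hγ0 : 0 ≤ γ) (hγ1 : γ < 1) (ι : P → Policy Ahat P Ept)
    (h : Hist Ahat P Ept) (a : Act Ahat P) : Qre ι ρ u γ h a ∈ Icc 0 (1 - γ)⁻¹ :=
  tsum_pow_mul_mem_Icc hγ0 hγ1 fun n => EUre_mem_Icc hρ0 hρ1 hu ι n h a

theorem Qre_eq_sum (hρ0 : ∀ wh a e, 0 ≤ ρ wh a e) (hρ1 : ∀ wh a, ∑ e, ρ wh a e = 1)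
    (hu : ∀ wh, u wh ∈ Icc (0 : ℝ) 1) (hγ0 : 0 ≤ γ) (hγ1 : γ < 1) (ι : P → Policy Ahat P Ept)
    (h : Hist Ahat P Ept) (a : Act Ahat P) :
    Qre ι ρ u γ h a = ∑ e, ρ (hworld h) a.1 e *
      (u (hworld h ++ [(a.1, e)]) + γ * Vre ι ρ u γ (ι a.2) (h ++ [(a, e)])) := by
  have hsum : ∀ h a, Summable fun n => γ ^ n * EUre ι ρ u h a n := fun h a =>
    summable_pow_mul_of_mem_Icc hγ0 hγ1 fun n => EUre_mem_Icc hρ0 hρ1 hu ι n h a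
  calc Qre ι ρ u γ h a
      = EUre ι ρ u h a 0 + ∑' n, γ ^ (n + 1) * EUre ι ρ u h a (n + 1) := by
        rw [Qre, (hsum h a).tsum_eq_zero_add, pow_zero, one_mul]
    _ = ∑ e, ρ (hworld h) a.1 e * u (hworld h ++ [(a.1, e)]) + ∑' n, ∑ e, ρ (hworld h) a.1 e *
          γ * (γ ^ n * EUre ι ρ u (h ++ [(a, e)]) (ι a.2 (h ++ [(a, e)])) n) := by
        simp only [EUre, mul_sum, pow_succ]
        congr 1
        exact tsum_congr fun n => sum_congr rfl fun e _ => by ring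
    _ = ∑ e, ρ (hworld h) a.1 e * u (hworld h ++ [(a.1, e)]) + ∑ e,
          ρ (hworld h) a.1 e * γ * Vre ι ρ u γ (ι a.2) (h ++ [(a, e)]) := by
        rw [Summable.tsum_finsetSum fun e _ => (hsum _ _).mul_left _]
        simp only [tsum_mul_left]
        rfl
    _ = _ := by
        rw [← sum_add_distrib]
        exact sum_congr rfl fun e _ => by ring

def bellmanQ (ρ : List (Ahat × Ept) → Ahat → Ept → ℝ) (u : List (Ahat × Ept) → ℝ) (γ : ℝ)
    (V : List (Ahat × Ept) → ℝ) (wh : List (Ahat × Ept)) (a : Ahat) : ℝ :=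
  ∑ e, ρ wh a e * (u (wh ++ [(a, e)]) + γ * V (wh ++ [(a, e)]))

theorem bellmanQ_mono (hρ0 : ∀ wh a e, 0 ≤ ρ wh a e) (hγ0 : 0 ≤ γ)
    {V W : List (Ahat × Ept) → ℝ} (hVW : V ≤ W) (wh : List (Ahat × Ept)) (a : Ahat) :
    bellmanQ ρ u γ V wh a ≤ bellmanQ ρ u γ W wh a :=
  sum_le_sum fun _ _ => mul_le_mul_of_nonneg_left
    (add_le_add_right (mul_le_mul_of_nonneg_left (hVW _) hγ0) _) (hρ0 _ _ _)

theorem bellmanQ_mem_Icc (hρ0 : ∀ wh a e, 0 ≤ ρ wh a e) (hρ1 : ∀ wh a, ∑ e, ρ wh a e = 1)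
    (hu : ∀ wh, u wh ∈ Icc (0 : ℝ) 1) (hγ0 : 0 ≤ γ) (hγ1 : γ < 1)
    {V : List (Ahat × Ept) → ℝ} (hV : ∀ wh, V wh ∈ Icc 0 (1 - γ)⁻¹)
    (wh : List (Ahat × Ept)) (a : Ahat) : bellmanQ ρ u γ V wh a ∈ Icc 0 (1 - γ)⁻¹ := by
  have hB : 1 + γ * (1 - γ)⁻¹ = (1 - γ)⁻¹ := by
    have : 1 - γ ≠ 0 := (sub_pos.2 hγ1).ne'
    field_simp
    ring
  refine sum_mul_mem_Icc (hρ0 _ _) (hρ1 _ _) fun e => ?_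
  obtain ⟨hu0, hu1⟩ := hu (wh ++ [(a, e)])
  obtain ⟨hV0, hV1⟩ := hV (wh ++ [(a, e)])
  exact ⟨by positivity, hB ▸ add_le_add hu1 (mul_le_mul_of_nonneg_left hV1 hγ0)⟩

theorem exists_isGreatest_bellmanQ [Finite Ahat] [Nonempty Ahat] (hρ0 : ∀ wh a e, 0 ≤ ρ wh a e)
    (hρ1 : ∀ wh a, ∑ e, ρ wh a e = 1) (hu : ∀ wh, u wh ∈ Icc (0 : ℝ) 1) (hγ0 : 0 ≤ γ)
    (hγ1 : γ < 1) :
    ∃ V : List (Ahat × Ept) → ℝ, (∀ wh, V wh ∈ Icc 0 (1 - γ)⁻¹) ∧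
      ∀ wh, IsGreatest (range (bellmanQ ρ u γ V wh)) (V wh) := by
  have hbdd : ∀ V wh, BddAbove (range (bellmanQ ρ u γ V wh)) := fun V wh =>
    (finite_range _).bddAbove
  have hmono : Monotone fun V (wh : List (Ahat × Ept)) => ⨆ a, bellmanQ ρ u γ V wh a :=
    fun V W hVW wh => ciSup_mono (hbdd W wh) (bellmanQ_mono hρ0 hγ0 hVW wh)
  have hmaps : MapsTo (fun V (wh : List (Ahat × Ept)) => ⨆ a, bellmanQ ρ u γ V wh a)
      (Icc 0 fun _ => (1 - γ)⁻¹) (Icc 0 fun _ => (1 - γ)⁻¹) := fun V hV => by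
    have hQ := bellmanQ_mem_Icc hρ0 hρ1 hu hγ0 hγ1 fun wh => ⟨hV.1 wh, hV.2 wh⟩
    exact ⟨fun wh => le_ciSup_of_le (hbdd V wh) (Classical.arbitrary Ahat) (hQ wh _).1,
      fun wh => ciSup_le fun a => (hQ wh a).2⟩
  obtain ⟨V, hV, hfix⟩ := exists_isFixedPt_of_monotone_of_mapsTo_Icc
    (fun _ => (inv_pos.2 (sub_pos.2 hγ1)).le) hmono hmaps
  refine ⟨V, fun wh => ⟨hV.1 wh, hV.2 wh⟩, fun wh => congrFun hfix wh ▸ ⟨?_, ?_⟩⟩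
  · exact (range_nonempty _).csSup_mem (finite_range _)
  · exact fun _ hx => le_csSup (hbdd V wh) hx

theorem Qre_sub_bellmanQ (hρ0 : ∀ wh a e, 0 ≤ ρ wh a e) (hρ1 : ∀ wh a, ∑ e, ρ wh a e = 1)
    (hu : ∀ wh, u wh ∈ Icc (0 : ℝ) 1) (hγ0 : 0 ≤ γ) (hγ1 : γ < 1) (ι : P → Policy Ahat P Ept)
    (V : List (Ahat × Ept) → ℝ) (h : Hist Ahat P Ept) (a : Act Ahat P) :
    Qre ι ρ u γ h a - bellmanQ ρ u γ V (hworld h) a.1 = γ * ∑ e, ρ (hworld h) a.1 e *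
      (Vre ι ρ u γ (ι a.2) (h ++ [(a, e)]) - V (hworld (h ++ [(a, e)]))) := by
  rw [Qre_eq_sum hρ0 hρ1 hu hγ0 hγ1, bellmanQ, ← sum_sub_distrib, mul_sum]
  refine sum_congr rfl fun e _ => ?_
  rw [hworld_append_singleton]
  ring

theorem Qre_le_of_bellmanQ_le (hρ0 : ∀ wh a e, 0 ≤ ρ wh a e) (hρ1 : ∀ wh a, ∑ e, ρ wh a e = 1)
    (hu : ∀ wh, u wh ∈ Icc (0 : ℝ) 1) (hγ0 : 0 ≤ γ) (hγ1 : γ < 1) (ι : P → Policy Ahat P Ept)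
    {V : List (Ahat × Ept) → ℝ} (hV0 : ∀ wh, 0 ≤ V wh)
    (hV : ∀ wh a, bellmanQ ρ u γ V wh a ≤ V wh) (h : Hist Ahat P Ept) (a : Act Ahat P) :
    Qre ι ρ u γ h a ≤ V (hworld h) := by
  let f : Hist Ahat P Ept × Act Ahat P → ℝ := fun x => Qre ι ρ u γ x.1 x.2 - V (hworld x.1)
  have hf : BddAbove (range f) := ⟨(1 - γ)⁻¹, forall_mem_range.2 fun x => by
    linarith [(Qre_mem_Icc hρ0 hρ1 hu hγ0 hγ1 ι x.1 x.2).2, hV0 (hworld x.1)]⟩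
  have hstep : ∀ x, f x ≤ γ * ∑ e, ρ (hworld x.1) x.2.1 e *
      f (x.1 ++ [(x.2, e)], ι x.2.2 (x.1 ++ [(x.2, e)])) := fun x => by
    have := Qre_sub_bellmanQ hρ0 hρ1 hu hγ0 hγ1 ι V x.1 x.2
    simp only [Vre] at this
    simp only [f]
    linarith [hV (hworld x.1) x.2.1]
  exact sub_nonpos.1 <| nonpos_of_le_mul_weighted_sum hγ0 hγ1 hf _ _
    (fun _ => hρ0 _ _) (fun _ => hρ1 _ _) hstep (h, a)

theorem le_Vre_of_bellmanQ_eq (hρ0 : ∀ wh a e, 0 ≤ ρ wh a e) (hρ1 : ∀ wh a, ∑ e, ρ wh a e = 1)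
    (hu : ∀ wh, u wh ∈ Icc (0 : ℝ) 1) (hγ0 : 0 ≤ γ) (hγ1 : γ < 1) (ι : P → Policy Ahat P Ept)
    {V : List (Ahat × Ept) → ℝ} (hV : ∀ wh, V wh ≤ (1 - γ)⁻¹) {pw : List (Ahat × Ept) → Ahat}
    (hpw : ∀ wh, bellmanQ ρ u γ V wh (pw wh) = V wh) {p : P}
    (hp : ι p = fun h => (pw (hworld h), p)) (h : Hist Ahat P Ept) :
    V (hworld h) ≤ Vre ι ρ u γ (ι p) h := by
  let f : Hist Ahat P Ept → ℝ := fun h => V (hworld h) - Vre ι ρ u γ (ι p) h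
  have hf : BddAbove (range f) := ⟨(1 - γ)⁻¹, forall_mem_range.2 fun h => by
    simp only [f, Vre]
    linarith [(Qre_mem_Icc hρ0 hρ1 hu hγ0 hγ1 ι h (ι p h)).1, hV (hworld h)]⟩
  have hstep : ∀ h, f h ≤ γ * ∑ e, ρ (hworld h) (pw (hworld h)) e *
      f (h ++ [((pw (hworld h), p), e)]) := fun h => by
    have := Qre_sub_bellmanQ hρ0 hρ1 hu hγ0 hγ1 ι V h (pw (hworld h), p)
    have hVre : Vre ι ρ u γ (ι p) h = Qre ι ρ u γ h (pw (hworld h), p) := by rw [Vre, hp]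
    simp only [f, ← neg_sub (Vre ι ρ u γ (ι p) _), mul_neg, sum_neg_distrib]
    linarith [hpw (hworld h)]
  exact sub_nonpos.1 <| nonpos_of_le_mul_weighted_sum hγ0 hγ1 hf _ _
    (fun _ => hρ0 _ _) (fun _ => hρ1 _ _) hstep h

end ValueFunctions

theorem exists_optimal_nonmodifying_policy_general
    {Ahat P Ept : Type*} [Fintype Ahat] [Nonempty Ahat] [Fintype Ept]
    (ι : P → Policy Ahat P Ept)
    (hname : ∀ pw : List (Ahat × Ept) → Ahat,
      ∃ p : P, ι p = fun h : Hist Ahat P Ept => (pw (hworld h), p))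
    (ρ : List (Ahat × Ept) → Ahat → Ept → ℝ)
    (hρpos : ∀ wh (aw : Ahat) (e : Ept), 0 < ρ wh aw e)
    (hρsum : ∀ wh (aw : Ahat), ∑ e, ρ wh aw e = 1)
    (u : List (Ahat × Ept) → ℝ)
    (hu : ∀ wh, u wh ∈ Set.Icc (0 : ℝ) 1)
    (γ : ℝ) (hγ0 : 0 < γ) (hγ1 : γ < 1) :
    ∃ πs : Policy Ahat P Ept,
      ModIndep πs ∧
      (∀ h : Hist Ahat P Ept, ι (πs h).2 = πs) ∧
      (∀ h : Hist Ahat P Ept,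
        Vre ι ρ u γ πs h = ⨆ π : Policy Ahat P Ept, Vre ι ρ u γ π h) := by
  have hρ0 : ∀ wh a e, 0 ≤ ρ wh a e := fun wh a e => (hρpos wh a e).le
  obtain ⟨V, hV, hVmax⟩ := exists_isGreatest_bellmanQ hρ0 hρsum hu hγ0.le hγ1
  choose pw hpw using fun wh => (hVmax wh).1
  obtain ⟨p, hp⟩ := hname pw
  have hle : ∀ π h, Vre ι ρ u γ π h ≤ V (hworld h) := fun π h =>
    Qre_le_of_bellmanQ_le hρ0 hρsum hu hγ0.le hγ1 ι (fun wh => (hV wh).1)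
      (fun wh a => (hVmax wh).2 (mem_range_self a)) h (π h)
  have hge : ∀ h, V (hworld h) ≤ Vre ι ρ u γ (ι p) h :=
    le_Vre_of_bellmanQ_eq hρ0 hρsum hu hγ0.le hγ1 ι (fun wh => (hV wh).2) hpw hp
  refine ⟨ι p, fun h h' hw => by rw [hp]; simp only [hw], fun h => by rw [congrFun hp h],
    fun h => ?_⟩
  have hgreatest : IsGreatest (range fun π => Vre ι ρ u γ π h) (Vre ι ρ u γ (ι p) h) :=
    ⟨⟨ι p, rfl⟩, forall_mem_range.2 fun π => (hle π h).trans (hge h)⟩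
  exact hgreatest.csSup_eq.symm

/-- **Existence of an optimal, modification-independent, non-modifying
policy for the realistic value functions.** -/
theorem exists_optimal_nonmodifying_policy
    {Ahat P Ept : Type*} [Fintype Ahat] [Nonempty Ahat] [Fintype Ept] [Nonempty Ept]
    (ι : P → Policy Ahat P Ept)
    (hname : ∀ pw : List (Ahat × Ept) → Ahat,
      ∃ p : P, ι p = fun h : Hist Ahat P Ept => (pw (hworld h), p))
    (ρ : List (Ahat × Ept) → Ahat → Ept → ℝ)
    (hρpos : ∀ wh (aw : Ahat) (e : Ept), 0 < ρ wh aw e)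
    (hρsum : ∀ wh (aw : Ahat), ∑ e, ρ wh aw e = 1)
    (u : List (Ahat × Ept) → ℝ)
    (hu : ∀ wh, u wh ∈ Set.Icc (0 : ℝ) 1)
    (γ : ℝ) (hγ0 : 0 < γ) (hγ1 : γ < 1) :
    ∃ πs : Policy Ahat P Ept,
      ModIndep πs ∧
      (∀ h : Hist Ahat P Ept, ι (πs h).2 = πs) ∧
      (∀ h : Hist Ahat P Ept,
        Vre ι ρ u γ πs h = ⨆ π : Policy Ahat P Ept, Vre ι ρ u γ π h) :=
  exists_optimal_nonmodifying_policy_general ι hname ρ hρpos hρsum u hu γ hγ0 hγ1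

end Stmt9
end
end

section
/- For any policy-self-modification model (Â, E, P, ι) with modification-independent belief ρ and modification-independent utility function u, there exist an extended name set P' ⊇ P and an extended naming map ι' ⊇ ι such that some policy π* for the extended model (Â, E, P', ι') is optimal with respect to the realistic value function, has a name p* ∈ P' with ι'(p*) = π*, and can be taken to be modification-independent and non-modifying (it always selects its own name p*). -/
/-!
Solve the Bellman equation on world histories: the Bellman operator is a `γ`-contraction of
`ℓ^∞`, so it has a fixed point `V*`. Since belief and utility only see world histories, the
realistic value of any action, whatever policies its name leads to, is at most the optimal
`Q`-value `Q*`: the excess over `Q*` satisfies `f ≤ γ · sup f` and is bounded, hence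
nonpositive. A non-modifying policy acting greedily w.r.t. `Q*` attains `Q*` by the same
argument applied to `|f|`. Such a policy only needs a name for itself, so adjoin one fresh
name to `P`.
-/

noncomputable section

namespace Stmt10

/-- Actions: a world action together with the name of the policy selected for
the next step. -/
abbrev Act (Ahat P : Type*) : Type _ := Ahat × P

/-- Histories: finite sequences of action–percept pairs. -/
abbrev Hist (Ahat P Ept : Type*) : Type _ := List (Act Ahat P × Ept)

/-- Policies: maps from histories to actions. -/
abbrev Policy (Ahat P Ept : Type*) : Type _ := Hist Ahat P Ept → Act Ahat P

/-- The world part of a history (policy-name components deleted). -/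
def hworld {Ahat P Ept : Type*} (h : Hist Ahat P Ept) : List (Ahat × Ept) :=
  h.map fun pe => (pe.1.1, pe.2)

/-- A function on histories is modification-independent if its value depends
only on the world part of its argument. -/
def ModIndep {Ahat P Ept α : Type*} (f : Hist Ahat P Ept → α) : Prop :=
  ∀ h h' : Hist Ahat P Ept, hworld h = hworld h' → f h = f h'


/-- `EUre ι ρ u h a n`: expected `u`-utility received `n` steps after taking
action `a` following history `h`, with percepts sampled from `ρ` and every
future action taken by the policy selected by the preceding action (the
realistic measure `ρ_re`). -/
def EUre {Ahat P Ept : Type*} [Fintype Ept] (ι : P → Policy Ahat P Ept)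
    (ρ : List (Ahat × Ept) → Ahat → Ept → ℝ) (u : List (Ahat × Ept) → ℝ) :
    Hist Ahat P Ept → Act Ahat P → ℕ → ℝ
  | h, a, 0 => ∑ e, ρ (hworld h) a.1 e * u (hworld h ++ [(a.1, e)])
  | h, a, n + 1 =>
      ∑ e, ρ (hworld h) a.1 e *
        EUre ι ρ u (h ++ [(a, e)]) (ι a.2 (h ++ [(a, e)])) n

/-- The realistic `Q`-value: expected discounted `u`-utility when all future
actions are chosen by the policies selected through self-modification. -/
def Qre {Ahat P Ept : Type*} [Fintype Ept] (ι : P → Policy Ahat P Ept)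
    (ρ : List (Ahat × Ept) → Ahat → Ept → ℝ) (u : List (Ahat × Ept) → ℝ)
    (γ : ℝ) (h : Hist Ahat P Ept) (a : Act Ahat P) : ℝ :=
  ∑' n : ℕ, γ ^ n * EUre ι ρ u h a n

/-- The realistic `V`-value of a policy `π` (a policy argument beyond the next
action is superfluous, since the action determines the next policy). -/
def Vre {Ahat P Ept : Type*} [Fintype Ept] (ι : P → Policy Ahat P Ept)
    (ρ : List (Ahat × Ept) → Ahat → Ept → ℝ) (u : List (Ahat × Ept) → ℝ)
    (γ : ℝ) (π : Policy Ahat P Ept) (h : Hist Ahat P Ept) : ℝ :=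
  Qre ι ρ u γ h (π h)

/-- Transport of actions along a renaming of policy names. -/
def mapAct {Ahat P P' : Type*} (j : P → P') (a : Act Ahat P) : Act Ahat P' :=
  (a.1, j a.2)

/-- Transport of histories along a renaming of policy names. -/
def mapHist {Ahat P P' Ept : Type*} (j : P → P') (h : Hist Ahat P Ept) :
    Hist Ahat P' Ept :=
  h.map fun pe => (mapAct j pe.1, pe.2)


section

open scoped ENNReal lp

section WeightedSum

variable {ι : Type*} [Fintype ι] {w f : ι → ℝ} {c : ℝ}

theorem sum_mul_le_of_le (hw : ∀ i, 0 ≤ w i) (hw1 : ∑ i, w i = 1) (hf : ∀ i, f i ≤ c) :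
    ∑ i, w i * f i ≤ c :=
  calc ∑ i, w i * f i ≤ ∑ i, w i * c :=
        Finset.sum_le_sum fun i _ => mul_le_mul_of_nonneg_left (hf i) (hw i)
    _ = c := by rw [← Finset.sum_mul, hw1, one_mul]

theorem abs_sum_mul_le_of_abs_le (hw : ∀ i, 0 ≤ w i) (hw1 : ∑ i, w i = 1)
    (hf : ∀ i, |f i| ≤ c) : |∑ i, w i * f i| ≤ c := by
  refine abs_le.2 ⟨?_, sum_mul_le_of_le hw hw1 fun i => (abs_le.1 (hf i)).2⟩
  have := sum_mul_le_of_le (f := fun i => -f i) hw hw1 fun i => neg_le.1 (abs_le.1 (hf i)).1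
  simp only [mul_neg, Finset.sum_neg_distrib] at this
  linarith

end WeightedSum

theorem abs_ciSup_sub_ciSup_le {ι : Type*} [Finite ι] [Nonempty ι] {F G : ι → ℝ} {c : ℝ}
    (h : ∀ i, |F i - G i| ≤ c) : |(⨆ i, F i) - ⨆ i, G i| ≤ c := by
  have hF := (Set.finite_range F).bddAbove
  have hG := (Set.finite_range G).bddAbove
  refine abs_sub_le_iff.2 ⟨sub_le_iff_le_add.2 (ciSup_le fun i => ?_),
    sub_le_iff_le_add.2 (ciSup_le fun i => ?_)⟩
  · linarith [(abs_sub_le_iff.1 (h i)).1, le_ciSup hG i]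
  · linarith [(abs_sub_le_iff.1 (h i)).2, le_ciSup hF i]

theorem nonpos_of_le_mul_ciSup {X : Type*} {f : X → ℝ} {γ : ℝ} (hγ : γ < 1)
    (hf : BddAbove (Set.range f)) (hstep : ∀ x, f x ≤ γ * ⨆ y, f y) (x : X) : f x ≤ 0 := by
  have : Nonempty X := ⟨x⟩
  have hsup : (⨆ y, f y) ≤ γ * ⨆ y, f y := ciSup_le hstep
  exact (le_ciSup hf x).trans (by nlinarith)

@[simp]
theorem hworld_append {Ahat P Ept : Type*} (h : Hist Ahat P Ept) (a : Act Ahat P) (e : Ept) :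
    hworld (h ++ [(a, e)]) = hworld h ++ [(a.1, e)] := by
  simp [hworld]

variable {Ahat Ept : Type*} [Fintype Ept]
  {ρ : List (Ahat × Ept) → Ahat → Ept → ℝ} {u : List (Ahat × Ept) → ℝ} {γ : ℝ}

structure IsDiscountedModel (ρ : List (Ahat × Ept) → Ahat → Ept → ℝ)
    (u : List (Ahat × Ept) → ℝ) (γ : ℝ) : Prop where
  ρ_nonneg : ∀ wh a e, 0 ≤ ρ wh a e
  sum_ρ : ∀ wh a, ∑ e, ρ wh a e = 1
  abs_u_le : ∀ wh, |u wh| ≤ 1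
  γ_nonneg : 0 ≤ γ
  γ_lt_one : γ < 1

section Realistic

variable {P : Type*} {ι : P → Policy Ahat P Ept}

theorem abs_EUre_le_one (hρ0 : ∀ wh a e, 0 ≤ ρ wh a e) (hρ1 : ∀ wh a, ∑ e, ρ wh a e = 1)
    (hu : ∀ wh, |u wh| ≤ 1) (n : ℕ) :
    ∀ (h : Hist Ahat P Ept) (a : Act Ahat P), |EUre ι ρ u h a n| ≤ 1 := by
  induction n with
  | zero => exact fun h a => abs_sum_mul_le_of_abs_le (hρ0 _ _) (hρ1 _ _) fun e => hu _
  | succ n ih => exact fun h a => abs_sum_mul_le_of_abs_le (hρ0 _ _) (hρ1 _ _) fun e => ih _ _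

variable (H : IsDiscountedModel ρ u γ)
include H

theorem abs_pow_mul_EUre_le (h : Hist Ahat P Ept) (a : Act Ahat P) (n : ℕ) :
    |γ ^ n * EUre ι ρ u h a n| ≤ γ ^ n := by
  rw [abs_mul, abs_of_nonneg (pow_nonneg H.γ_nonneg n)]
  exact mul_le_of_le_one_right (pow_nonneg H.γ_nonneg n)
    (abs_EUre_le_one H.ρ_nonneg H.sum_ρ H.abs_u_le n h a)

theorem summable_EUre (h : Hist Ahat P Ept) (a : Act Ahat P) :
    Summable fun n => γ ^ n * EUre ι ρ u h a n :=
  .of_norm_bounded (summable_geometric_of_lt_one H.γ_nonneg H.γ_lt_one)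
    (abs_pow_mul_EUre_le H h a)

theorem abs_Qre_le (h : Hist Ahat P Ept) (a : Act Ahat P) :
    |Qre ι ρ u γ h a| ≤ (1 - γ)⁻¹ := by
  rw [Qre, ← tsum_geometric_of_lt_one H.γ_nonneg H.γ_lt_one]
  exact (norm_tsum_le_tsum_norm (summable_EUre H h a).norm).trans
    ((summable_EUre H h a).norm.tsum_le_tsum (abs_pow_mul_EUre_le H h a)
      (summable_geometric_of_lt_one H.γ_nonneg H.γ_lt_one))

theorem Qre_eq (h : Hist Ahat P Ept) (a : Act Ahat P) :
    Qre ι ρ u γ h a = ∑ e, ρ (hworld h) a.1 e * (u (hworld h ++ [(a.1, e)]) +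
      γ * Qre ι ρ u γ (h ++ [(a, e)]) (ι a.2 (h ++ [(a, e)]))) := by
  have htail : ∑' n, γ ^ (n + 1) * EUre ι ρ u h a (n + 1) =
      ∑ e, ρ (hworld h) a.1 e *
        (γ * Qre ι ρ u γ (h ++ [(a, e)]) (ι a.2 (h ++ [(a, e)]))) := by
    simp_rw [Qre, ← tsum_mul_left]
    rw [← Summable.tsum_finsetSum fun e _ => ((summable_EUre H _ _).mul_left _).mul_left _]
    congr 1
    funext n
    simp only [EUre, Finset.mul_sum]
    congr 1
    funext e
    ring
  rw [Qre, (summable_EUre H h a).tsum_eq_zero_add, htail]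
  simp only [EUre, pow_zero, one_mul, mul_add, Finset.sum_add_distrib]

end Realistic

section Bellman

def bellmanQ (ρ : List (Ahat × Ept) → Ahat → Ept → ℝ) (u : List (Ahat × Ept) → ℝ)
    (γ : ℝ) (V : List (Ahat × Ept) → ℝ) (wh : List (Ahat × Ept)) (b : Ahat) : ℝ :=
  ∑ e, ρ wh b e * (u (wh ++ [(b, e)]) + γ * V (wh ++ [(b, e)]))

variable (H : IsDiscountedModel ρ u γ)
include H

theorem abs_bellmanQ_le {V : List (Ahat × Ept) → ℝ} {C : ℝ} (hV : ∀ wh, |V wh| ≤ C)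
    (wh : List (Ahat × Ept)) (b : Ahat) : |bellmanQ ρ u γ V wh b| ≤ 1 + γ * C :=
  abs_sum_mul_le_of_abs_le (H.ρ_nonneg _ _) (H.sum_ρ _ _) fun _ =>
    (abs_add_le _ _).trans <| add_le_add (H.abs_u_le _) <| by
      rw [abs_mul, abs_of_nonneg H.γ_nonneg]
      exact mul_le_mul_of_nonneg_left (hV _) H.γ_nonneg

theorem abs_bellmanQ_sub_bellmanQ_le {V W : List (Ahat × Ept) → ℝ} {c : ℝ}
    (hVW : ∀ wh, |V wh - W wh| ≤ c) (wh : List (Ahat × Ept)) (b : Ahat) :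
    |bellmanQ ρ u γ V wh b - bellmanQ ρ u γ W wh b| ≤ γ * c := by
  have hdiff : bellmanQ ρ u γ V wh b - bellmanQ ρ u γ W wh b =
      ∑ e, ρ wh b e * (γ * (V (wh ++ [(b, e)]) - W (wh ++ [(b, e)]))) := by
    simp only [bellmanQ, ← Finset.sum_sub_distrib]
    exact Finset.sum_congr rfl fun e _ => by ring
  rw [hdiff]
  refine abs_sum_mul_le_of_abs_le (H.ρ_nonneg _ _) (H.sum_ρ _ _) fun e => ?_
  rw [abs_mul, abs_of_nonneg H.γ_nonneg]
  exact mul_le_mul_of_nonneg_left (hVW _) H.γ_nonneg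

variable [Fintype Ahat] [Nonempty Ahat]

def bellman (V : ℓ^∞(List (Ahat × Ept), ℝ)) : ℓ^∞(List (Ahat × Ept), ℝ) :=
  ⟨fun wh => ⨆ b, bellmanQ ρ u γ V wh b, memℓp_infty ⟨1 + γ * ‖V‖, by
    rintro _ ⟨wh, rfl⟩
    simpa using abs_ciSup_sub_ciSup_le (G := fun _ => 0) fun b =>
      by simpa using abs_bellmanQ_le H (lp.norm_apply_le_norm ENNReal.top_ne_zero V) wh b⟩⟩

theorem bellman_apply (V : ℓ^∞(List (Ahat × Ept), ℝ)) (wh : List (Ahat × Ept)) :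
    bellman H V wh = ⨆ b, bellmanQ ρ u γ V wh b :=
  rfl

theorem contractingWith_bellman : ContractingWith γ.toNNReal (bellman H) := by
  refine ⟨by simpa using H.γ_lt_one, .of_dist_le_mul fun V W => ?_⟩
  rw [Real.coe_toNNReal _ H.γ_nonneg, dist_eq_norm, dist_eq_norm]
  refine lp.norm_le_of_forall_le (by positivity [H.γ_nonneg]) fun wh => ?_
  rw [lp.coeFn_sub, Pi.sub_apply, bellman_apply, bellman_apply, Real.norm_eq_abs]
  refine abs_ciSup_sub_ciSup_le fun b => abs_bellmanQ_sub_bellmanQ_le H (fun wh => ?_) wh b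
  rw [← Pi.sub_apply, ← lp.coeFn_sub, ← Real.norm_eq_abs]
  exact lp.norm_apply_le_norm ENNReal.top_ne_zero _ wh

def optimalValue (wh : List (Ahat × Ept)) : ℝ :=
  ContractingWith.fixedPoint (bellman H) (contractingWith_bellman H) wh

def optimalQ : List (Ahat × Ept) → Ahat → ℝ :=
  bellmanQ ρ u γ (optimalValue H)

theorem optimalValue_eq_iSup (wh : List (Ahat × Ept)) :
    optimalValue H wh = ⨆ b, optimalQ H wh b :=
  (congrArg (fun V : ℓ^∞(List (Ahat × Ept), ℝ) => V wh)
    (contractingWith_bellman H).fixedPoint_isFixedPt).symm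

theorem optimalQ_le_optimalValue (wh : List (Ahat × Ept)) (b : Ahat) :
    optimalQ H wh b ≤ optimalValue H wh := by
  rw [optimalValue_eq_iSup]
  exact le_ciSup (Set.finite_range _).bddAbove b

def greedy (wh : List (Ahat × Ept)) : Ahat :=
  (exists_eq_ciSup_of_finite (f := optimalQ H wh)).choose

theorem optimalQ_greedy (wh : List (Ahat × Ept)) :
    optimalQ H wh (greedy H wh) = optimalValue H wh := by
  rw [optimalValue_eq_iSup]
  exact (exists_eq_ciSup_of_finite (f := optimalQ H wh)).choose_spec

theorem exists_abs_optimalQ_le : ∃ C, ∀ wh b, |optimalQ H wh b| ≤ C :=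
  ⟨_, abs_bellmanQ_le H fun wh =>
    lp.norm_apply_le_norm ENNReal.top_ne_zero
      (ContractingWith.fixedPoint (bellman H) (contractingWith_bellman H)) wh⟩

end Bellman

section Optimality

variable {P : Type*} {ι : P → Policy Ahat P Ept} (H : IsDiscountedModel ρ u γ)
include H

theorem Qre_sub_bellmanQ (V : List (Ahat × Ept) → ℝ) (h : Hist Ahat P Ept) (a : Act Ahat P) :
    Qre ι ρ u γ h a - bellmanQ ρ u γ V (hworld h) a.1 = γ * ∑ e, ρ (hworld h) a.1 e *
      (Qre ι ρ u γ (h ++ [(a, e)]) (ι a.2 (h ++ [(a, e)])) - V (hworld h ++ [(a.1, e)])) := by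
  rw [Qre_eq H, bellmanQ, ← Finset.sum_sub_distrib, Finset.mul_sum]
  exact Finset.sum_congr rfl fun e _ => by ring

variable [Fintype Ahat] [Nonempty Ahat]

theorem exists_abs_Qre_sub_optimalQ_le :
    ∃ C, ∀ h a, |Qre ι ρ u γ h a - optimalQ H (hworld h) a.1| ≤ C := by
  obtain ⟨C, hC⟩ := exists_abs_optimalQ_le H
  exact ⟨(1 - γ)⁻¹ + C, fun h a =>
    (abs_sub _ _).trans (add_le_add (abs_Qre_le H h a) (hC _ _))⟩

theorem Qre_le_optimalQ (h : Hist Ahat P Ept) (a : Act Ahat P) :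
    Qre ι ρ u γ h a ≤ optimalQ H (hworld h) a.1 := by
  set f : Hist Ahat P Ept × Act Ahat P → ℝ :=
    fun x => Qre ι ρ u γ x.1 x.2 - optimalQ H (hworld x.1) x.2.1
  obtain ⟨C, hC⟩ := exists_abs_Qre_sub_optimalQ_le H (ι := ι)
  have hbdd : BddAbove (Set.range f) :=
    ⟨C, by rintro _ ⟨x, rfl⟩; exact (le_abs_self _).trans (hC _ _)⟩
  have hstep : ∀ x, f x ≤ γ * ⨆ y, f y := by
    rintro ⟨h, a⟩
    refine (Qre_sub_bellmanQ H _ h a).trans_le (mul_le_mul_of_nonneg_left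
      (sum_mul_le_of_le (H.ρ_nonneg _ _) (H.sum_ρ _ _) fun e => ?_) H.γ_nonneg)
    have hV := optimalQ_le_optimalValue H (hworld h ++ [(a.1, e)]) (ι a.2 (h ++ [(a, e)])).1
    have hsup := le_ciSup hbdd (h ++ [(a, e)], ι a.2 (h ++ [(a, e)]))
    simp only [f, hworld_append] at hsup
    linarith
  linarith [nonpos_of_le_mul_ciSup H.γ_lt_one hbdd hstep (h, a)]

theorem Qre_eq_optimalQ_of_greedy {p : P} (hp : ∀ h, ι p h = (greedy H (hworld h), p))
    (h : Hist Ahat P Ept) (b : Ahat) : Qre ι ρ u γ h (b, p) = optimalQ H (hworld h) b := by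
  set g : Hist Ahat P Ept × Ahat → ℝ :=
    fun x => |Qre ι ρ u γ x.1 (x.2, p) - optimalQ H (hworld x.1) x.2|
  obtain ⟨C, hC⟩ := exists_abs_Qre_sub_optimalQ_le H (ι := ι)
  have hbdd : BddAbove (Set.range g) := ⟨C, by rintro _ ⟨x, rfl⟩; exact hC _ _⟩
  have hstep : ∀ x, g x ≤ γ * ⨆ y, g y := by
    rintro ⟨h, b⟩
    rw [show g (h, b) = |_| from rfl, optimalQ, Qre_sub_bellmanQ H, abs_mul,
      abs_of_nonneg H.γ_nonneg]
    refine mul_le_mul_of_nonneg_left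
      (abs_sum_mul_le_of_abs_le (H.ρ_nonneg _ _) (H.sum_ρ _ _) fun e => ?_) H.γ_nonneg
    have hsup := le_ciSup hbdd (h ++ [((b, p), e)], greedy H (hworld h ++ [(b, e)]))
    simp only [g, hworld_append] at hsup
    rwa [hp, hworld_append, ← optimalQ_greedy H]
  exact sub_eq_zero.1 (abs_nonpos_iff.1 (nonpos_of_le_mul_ciSup H.γ_lt_one hbdd hstep (h, b)))

end Optimality

end

/-- Old policies read the fresh name `none` as their own name; any reading would do, since
the extended naming map only has to agree with `ι` on histories built from old names. -/
def adjoinName {Ahat Ept P : Type*} (ι : P → Policy Ahat P Ept)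
    (π : Policy Ahat (Option P) Ept) : Option P → Policy Ahat (Option P) Ept
  | none => π
  | some p => fun h => mapAct some (ι p (mapHist (fun q => q.getD p) h))

theorem adjoinName_some_mapHist {Ahat Ept P : Type*} (ι : P → Policy Ahat P Ept)
    (π : Policy Ahat (Option P) Ept) (p : P) (h : Hist Ahat P Ept) :
    adjoinName ι π (some p) (mapHist some h) = mapAct some (ι p h) := by
  simp [adjoinName, mapHist, mapAct, Function.comp_def]

universe u

theorem optimal_policy_name_general
    {Ahat Ept : Type*} [Fintype Ahat] [Nonempty Ahat] [Fintype Ept]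
    (P : Type u) (ι : P → Policy Ahat P Ept)
    (ρ : List (Ahat × Ept) → Ahat → Ept → ℝ)
    (hρpos : ∀ wh (aw : Ahat) (e : Ept), 0 < ρ wh aw e)
    (hρsum : ∀ wh (aw : Ahat), ∑ e, ρ wh aw e = 1)
    (u : List (Ahat × Ept) → ℝ)
    (hu : ∀ wh, u wh ∈ Set.Icc (0 : ℝ) 1)
    (γ : ℝ) (hγ0 : 0 < γ) (hγ1 : γ < 1) :
    ∃ (P' : Type u) (j : P ↪ P') (ι' : P' → Policy Ahat P' Ept),
      (∀ (p : P) (h : Hist Ahat P Ept),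
        ι' (j p) (mapHist j h) = mapAct j (ι p h)) ∧
      ∃ (ps : P') (πs : Policy Ahat P' Ept),
        ι' ps = πs ∧
        (∀ h : Hist Ahat P' Ept, (πs h).2 = ps) ∧
        ModIndep πs ∧
        (∀ h : Hist Ahat P' Ept,
          Vre ι' ρ u γ πs h = ⨆ π : Policy Ahat P' Ept, Vre ι' ρ u γ π h) := by
  have H : IsDiscountedModel ρ u γ :=
    ⟨fun wh a e => (hρpos wh a e).le, hρsum,
      fun wh => abs_le.2 ⟨by linarith [(hu wh).1], (hu wh).2⟩, hγ0.le, hγ1⟩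
  set πs : Policy Ahat (Option P) Ept := fun h => (greedy H (hworld h), none)
  set ι' := adjoinName ι πs
  have hπs : ∀ h, Vre ι' ρ u γ πs h = optimalValue H (hworld h) := fun h =>
    (Qre_eq_optimalQ_of_greedy H (p := none) (fun _ => rfl) h _).trans (optimalQ_greedy H _)
  have hle : ∀ π h, Vre ι' ρ u γ π h ≤ optimalValue H (hworld h) := fun π h =>
    (Qre_le_optimalQ H h (π h)).trans (optimalQ_le_optimalValue H _ _)
  refine ⟨Option P, .some, ι', adjoinName_some_mapHist ι πs, none, πs, rfl, fun _ => rfl,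
    fun h h' hw => by simp only [πs, hw], fun h => le_antisymm ?_ ?_⟩
  · exact le_ciSup ⟨_, Set.forall_mem_range.2 fun π => hle π h⟩ πs
  · exact ciSup_le fun π => (hle π h).trans (hπs h).ge

/-- **An optimal non-modifying policy can be given a name by extending the
name set.** -/
theorem optimal_policy_name
    {Ahat Ept : Type*} [Fintype Ahat] [Nonempty Ahat] [Fintype Ept] [Nonempty Ept]
    (P : Type u) (ι : P → Policy Ahat P Ept)
    (ρ : List (Ahat × Ept) → Ahat → Ept → ℝ)
    (hρpos : ∀ wh (aw : Ahat) (e : Ept), 0 < ρ wh aw e)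
    (hρsum : ∀ wh (aw : Ahat), ∑ e, ρ wh aw e = 1)
    (u : List (Ahat × Ept) → ℝ)
    (hu : ∀ wh, u wh ∈ Set.Icc (0 : ℝ) 1)
    (γ : ℝ) (hγ0 : 0 < γ) (hγ1 : γ < 1) :
    ∃ (P' : Type u) (j : P ↪ P') (ι' : P' → Policy Ahat P' Ept),
      (∀ (p : P) (h : Hist Ahat P Ept),
        ι' (j p) (mapHist j h) = mapAct j (ι p h)) ∧
      ∃ (ps : P') (πs : Policy Ahat P' Ept),
        ι' ps = πs ∧
        (∀ h : Hist Ahat P' Ept, (πs h).2 = ps) ∧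
        ModIndep πs ∧
        (∀ h : Hist Ahat P' Ept,
          Vre ι' ρ u γ πs h = ⨆ π : Policy Ahat P' Ept, Vre ι' ρ u γ π h) :=
  optimal_policy_name_general P ι ρ hρpos hρsum u hu γ hγ0 hγ1

end Stmt10
end
end
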